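/- arXiv:2211.06848 — 12 statements merged into one kernel-verified Lean document; each statement's English description precedes it below -/
import Mathlib

section
/- Let G act transitively on a set Ω preserving a G-invariant equivalence relation ∼ that is not the universal relation, and let ω ∈ Ω. Then G acts transitively on the set of pairs (ω₁,ω₂) with ω₁ ≁ ω₂ if and only if for every g ∈ G not stabilizing the block [ω], the group G is the disjoint union of the double coset G(ω)·g·G(ω) and the setwise stabilizer G([ω]) of the block [ω]. -/
/-!
Moving the second point of a pair to `ω`, the pairs of points in distinct blocks are, up to `G`,
the pairs `(g • ω, ω)` with `g ∉ G([ω])`, and two of them are in one `G`-orbit exactly when an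
element of `G(ω)` moves one first point to the other. So `G` is transitive on such pairs iff
`G(ω)` is transitive on `Ω \ [ω]`, i.e. iff `G \ G([ω])` is a single double coset `G(ω) g G(ω)`.
Disjointness of this double coset from `G([ω])` is automatic, since `G(ω) ≤ G([ω])`.
-/

open MulAction

section

variable {G Ω : Type*} [Group G] [MulAction G Ω] {r : Ω → Ω → Prop}

theorem rel_smul_smul_iff (hinv : ∀ (g : G) (x y : Ω), r x y → r (g • x) (g • y))
    (g : G) (x y : Ω) : r (g • x) (g • y) ↔ r x y :=
  ⟨fun h => by simpa using hinv g⁻¹ _ _ h, hinv g x y⟩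

theorem rel_mul_mul_smul_iff (hinv : ∀ (g : G) (x y : Ω), r x y → r (g • x) (g • y))
    {ω : Ω} {a b : G} (ha : a • ω = ω) (hb : b • ω = ω) (g : G) :
    r ((a * g * b) • ω) ω ↔ r (g • ω) ω := by
  rw [mul_smul, mul_smul, hb, ← rel_smul_smul_iff hinv a (g • ω) ω, ha]

theorem exists_mul_mul_of_not_rel
    (hpair : ∀ a b c d : Ω, ¬ r a b → ¬ r c d → ∃ g : G, g • a = c ∧ g • b = d)
    {ω : Ω} {g h : G} (hg : ¬ r (g • ω) ω) (hh : ¬ r (h • ω) ω) :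
    ∃ a b : G, a • ω = ω ∧ b • ω = ω ∧ h = a * g * b := by
  obtain ⟨k, hkg, hk⟩ := hpair _ _ _ _ hg hh
  refine ⟨k, g⁻¹ * k⁻¹ * h, hk, ?_, by group⟩
  rw [mul_smul, mul_smul, ← hkg, inv_smul_smul, inv_smul_smul]

theorem exists_smul_eq_smul_and_smul_eq [IsPretransitive G Ω]
    (hinv : ∀ (g : G) (x y : Ω), r x y → r (g • x) (g • y))
    {x y : Ω} (hxy : ¬ r x y) (ω : Ω) :
    ∃ u g : G, ¬ r (g • ω) ω ∧ u • x = g • ω ∧ u • y = ω := by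
  obtain ⟨u, hu⟩ := exists_smul_eq G y ω
  obtain ⟨g, hg⟩ := exists_smul_eq G ω (u • x)
  refine ⟨u, g, ?_, hg.symm, hu⟩
  rwa [hg, ← hu, rel_smul_smul_iff hinv]

theorem exists_smul_eq_pair_of_forall_mem_doubleCoset [IsPretransitive G Ω]
    (hinv : ∀ (g : G) (x y : Ω), r x y → r (g • x) (g • y)) {ω : Ω}
    (hcover : ∀ g : G, ¬ r (g • ω) ω →
      ∀ h : G, r (h • ω) ω ∨ ∃ a b : G, a • ω = ω ∧ b • ω = ω ∧ h = a * g * b)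
    {a b c d : Ω} (hab : ¬ r a b) (hcd : ¬ r c d) :
    ∃ g : G, g • a = c ∧ g • b = d := by
  obtain ⟨u, g₁, hg₁, hua, hub⟩ := exists_smul_eq_smul_and_smul_eq hinv hab ω
  obtain ⟨v, g₂, hg₂, hvc, hvd⟩ := exists_smul_eq_smul_and_smul_eq hinv hcd ω
  obtain ⟨p, q, hp, hq, rfl⟩ := (hcover g₁ hg₁ g₂).resolve_left hg₂
  refine ⟨v⁻¹ * p * u, ?_, ?_⟩
  · rw [mul_smul, mul_smul, hua, ← inv_smul_smul v c, hvc, mul_smul, mul_smul, hq]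
  · rw [mul_smul, mul_smul, hub, hp, ← hvd, inv_smul_smul]

end

theorem stmt_0_general {G Ω : Type*} [Group G] [MulAction G Ω]
    (r : Ω → Ω → Prop)
    (hinv : ∀ (g : G) (x y : Ω), r x y → r (g • x) (g • y))
    (htrans : MulAction.IsPretransitive G Ω) (ω : Ω) :
    (∀ a b c d : Ω, ¬ r a b → ¬ r c d → ∃ g : G, g • a = c ∧ g • b = d) ↔
    (∀ g : G, ¬ r (g • ω) ω →
      ((∀ h : G, r (h • ω) ω ∨ ∃ a b : G, a • ω = ω ∧ b • ω = ω ∧ h = a * g * b) ∧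
       (∀ a b : G, a • ω = ω → b • ω = ω → ¬ r ((a * g * b) • ω) ω))) := by
  refine ⟨fun hpair g hg => ⟨fun h => ?_, fun a b ha hb => ?_⟩, fun hcover a b c d => ?_⟩
  · exact or_iff_not_imp_left.mpr (exists_mul_mul_of_not_rel hpair hg)
  · exact (rel_mul_mul_smul_iff hinv ha hb g).not.mpr hg
  · exact exists_smul_eq_pair_of_forall_mem_doubleCoset hinv (fun g hg => (hcover g hg).1)

/-- Lemma 2.1 (double coset criterion for 2-by-block-transitivity). -/
theorem stmt_0 {G Ω : Type*} [Group G] [MulAction G Ω]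
    (r : Ω → Ω → Prop) (hequiv : Equivalence r)
    (hinv : ∀ (g : G) (x y : Ω), r x y → r (g • x) (g • y))
    (htrans : MulAction.IsPretransitive G Ω)
    (hnotuniv : ∃ x y : Ω, ¬ r x y) (ω : Ω) :
    (∀ a b c d : Ω, ¬ r a b → ¬ r c d → ∃ g : G, g • a = c ∧ g • b = d) ↔
    (∀ g : G, ¬ r (g • ω) ω →
      ((∀ h : G, r (h • ω) ω ∨ ∃ a b : G, a • ω = ω ∧ b • ω = ω ∧ h = a * g * b) ∧
       (∀ a b : G, a • ω = ω → b • ω = ω → ¬ r ((a * g * b) • ω) ω))) :=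
  stmt_0_general r hinv htrans ω
end

section
/- Let G be a finite group acting 2-by-block-transitively on a set Ω with invariant equivalence relation ∼, and let (ω,ω') be a pair of points in distinct blocks. Then the order of the two-point stabilizer satisfies |G(ω,ω')| = |G(ω)|² / (|G| − |G([ω])|). In particular |G(ω)|² is divisible by |G| − |G([ω])|. -/
/-!
If `S` is the stabilizer of `ω` and `ω'` lies outside the class of `ω`, then 2-by-block-transitivity
makes `S` transitive on the points outside `[ω]`, so that set is the `S`-orbit of `ω'`, of size
`|S| / |S ∩ G(ω')|`. The elements `g` with `g • ω ∉ [ω]` are the union of the cosets `gS` lying over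
that orbit, so there are `|G| - |G([ω])| = |S|² / |G(ω, ω')|` of them.
-/

open MulAction

namespace MulAction

variable {G α : Type*} [Group G] [MulAction G α]

theorem card_smul_mem_of_subset_orbit (a : α) {A : Set α} (hA : A ⊆ orbit G a) :
    Nat.card {g : G // g • a ∈ A} = Nat.card A * Nat.card (stabilizer G a) := by
  have hcard : Nat.card (ofQuotientStabilizer G a ⁻¹' A) = Nat.card A :=
    Nat.card_preimage_of_injective (injective_ofQuotientStabilizer G a) <| by
      rintro x hx
      obtain ⟨g, rfl⟩ := hA hx
      exact ⟨g, rfl⟩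
  rw [← hcard, mul_comm]
  exact QuotientGroup.card_preimage_mk (stabilizer G a) (ofQuotientStabilizer G a ⁻¹' A)

theorem card_orbit_mul_card_inf_stabilizer (S : Subgroup G) (b : α) :
    Nat.card (orbit S b) * Nat.card (S ⊓ stabilizer G b : Subgroup G) = Nat.card S := by
  have hstab : stabilizer S b = (S ⊓ stabilizer G b).subgroupOf S := by
    rw [Subgroup.inf_subgroupOf_left]; rfl
  rw [← Nat.card_congr (Subgroup.subgroupOfEquivOfLe inf_le_left).toEquiv, ← hstab,
    ← Nat.card_prod]
  exact Nat.card_congr (orbitProdStabilizerEquivGroup S b)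

end MulAction

def IsTwoByBlockTransitive (G : Type*) {α : Type*} [Group G] [MulAction G α]
    (r : α → α → Prop) : Prop :=
  ∀ a b c d : α, ¬ r a b → ¬ r c d → ∃ g : G, g • a = c ∧ g • b = d

namespace IsTwoByBlockTransitive

variable {G α : Type*} [Group G] [MulAction G α] {r : α → α → Prop}

theorem setOf_not_rel_subset_orbit (h2bt : IsTwoByBlockTransitive G r) {ω ω' : α}
    (hdist : ¬ r ω ω') : {x | ¬ r x ω} ⊆ orbit G ω := fun x hx ↦
  let ⟨g, hg, _⟩ := h2bt ω ω' x ω hdist hx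
  ⟨g, hg⟩

theorem orbit_stabilizer_eq_setOf_not_rel (h2bt : IsTwoByBlockTransitive G r)
    (hequiv : Equivalence r) (hinv : ∀ (g : G) (x y : α), r x y → r (g • x) (g • y)) {ω ω' : α}
    (hdist : ¬ r ω ω') : orbit (stabilizer G ω) ω' = {x | ¬ r x ω} := by
  ext x
  constructor
  · rintro ⟨s, rfl⟩ hx
    have h := hinv (s : G)⁻¹ (s • ω') ω hx
    rw [Subgroup.smul_def, inv_smul_smul, inv_smul_eq_iff.mpr (mem_stabilizer_iff.mp s.2).symm] at h
    exact hdist (hequiv.symm h)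
  · intro hx
    obtain ⟨g, hgω, hgω'⟩ := h2bt ω ω' ω x hdist (fun h ↦ hx (hequiv.symm h))
    exact ⟨⟨g, hgω⟩, hgω'⟩

end IsTwoByBlockTransitive

theorem stmt_1_general {G Ω : Type*} [Group G] [Finite G] [MulAction G Ω]
    (r : Ω → Ω → Prop) (hequiv : Equivalence r)
    (hinv : ∀ (g : G) (x y : Ω), r x y → r (g • x) (g • y))
    (h2bt : ∀ a b c d : Ω, ¬ r a b → ¬ r c d → ∃ g : G, g • a = c ∧ g • b = d)
    (ω ω' : Ω) (hdist : ¬ r ω ω') :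
    Nat.card (MulAction.stabilizer G ω ⊓ MulAction.stabilizer G ω' : Subgroup G) =
      (Nat.card (MulAction.stabilizer G ω)) ^ 2 /
        (Nat.card G - Nat.card {g : G // r (g • ω) ω}) ∧
    (Nat.card G - Nat.card {g : G // r (g • ω) ω}) ∣
      (Nat.card (MulAction.stabilizer G ω)) ^ 2 := by
  classical
  have : Fintype G := Fintype.ofFinite G
  have hblock : IsTwoByBlockTransitive G r := h2bt
  set S := stabilizer G ω
  have hfar : Nat.card {g : G // ¬ r (g • ω) ω} = Nat.card (orbit S ω') * Nat.card S := by
    rw [hblock.orbit_stabilizer_eq_setOf_not_rel hequiv hinv hdist]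
    exact card_smul_mem_of_subset_orbit ω (hblock.setOf_not_rel_subset_orbit hdist)
  have hcompl : Nat.card {g : G // ¬ r (g • ω) ω} =
      Nat.card G - Nat.card {g : G // r (g • ω) ω} := by
    simp only [Nat.card_eq_fintype_card]
    exact Fintype.card_subtype_compl (fun g : G ↦ r (g • ω) ω)
  have key : (Nat.card G - Nat.card {g : G // r (g • ω) ω}) *
      Nat.card (S ⊓ stabilizer G ω' : Subgroup G) = Nat.card S ^ 2 := by
    rw [← hcompl, hfar, mul_right_comm, card_orbit_mul_card_inf_stabilizer, sq]
  have hpos : 0 < Nat.card G - Nat.card {g : G // r (g • ω) ω} :=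
    Nat.pos_of_mul_pos_right (key ▸ pow_pos Nat.card_pos 2)
  exact ⟨(Nat.div_eq_of_eq_mul_right hpos key.symm).symm, Dvd.intro _ key⟩

/-- Corollary 2.2: order formula for the stabilizer of a distant pair. -/
theorem stmt_1 {G Ω : Type*} [Group G] [Finite G] [MulAction G Ω]
    (r : Ω → Ω → Prop) (hequiv : Equivalence r)
    (hinv : ∀ (g : G) (x y : Ω), r x y → r (g • x) (g • y))
    (hnotuniv : ∃ x y : Ω, ¬ r x y)
    (h2bt : ∀ a b c d : Ω, ¬ r a b → ¬ r c d → ∃ g : G, g • a = c ∧ g • b = d)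
    (ω ω' : Ω) (hdist : ¬ r ω ω') :
    Nat.card (MulAction.stabilizer G ω ⊓ MulAction.stabilizer G ω' : Subgroup G) =
      (Nat.card (MulAction.stabilizer G ω)) ^ 2 /
        (Nat.card G - Nat.card {g : G // r (g • ω) ω}) ∧
    (Nat.card G - Nat.card {g : G // r (g • ω) ω}) ∣
      (Nat.card (MulAction.stabilizer G ω)) ^ 2 :=
  stmt_1_general r hequiv hinv h2bt ω ω' hdist
end

section
/- Let G ≤ Sym(Ω) act k-by-block-transitively on Ω with respect to an equivalence relation ∼, where k ≥ 2. Then for each ω ∈ Ω, the block stabilizer G([ω]) is the largest proper subgroup of G containing the point stabilizer G(ω): every subgroup H with G(ω) ≤ H < G satisfies H ≤ G([ω]). -/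
/-!
Since `G(ω) ≤ H`, an element `g` lies in `H` as soon as `g • ω ∈ H • ω`, so it suffices to show
that `H • ω` is all of `Ω` once `H` contains some `h` moving `ω` out of its block. Block-transitivity
on `k ≥ 2` blocks makes `G` transitive on pairs of points in distinct blocks. For `g • ω` outside
the block of `ω`, an element of `G(ω)` carries `h • ω` to `g • ω`; for `g • ω` inside it, an
element sending `(ω, h • ω)` to `(h • ω, g • ω)` lies in `H`, as it maps `ω` to
`h • ω`, and does the same.
-/

open MulAction Function

section BlockTuples

variable {Ω : Type*} {r : Ω → Ω → Prop}

theorem Equivalence.exists_pairwise_not_rel_extending_pair (hr : Equivalence r) {ι : Type*}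
    {f : ι → Ω} (hf : Pairwise fun i j => ¬ r (f i) (f j)) {i₀ i₁ : ι} (hi : i₀ ≠ i₁)
    {a b : Ω} (hab : ¬ r a b) :
    ∃ g : ι → Ω, (Pairwise fun i j => ¬ r (g i) (g j)) ∧ g i₀ = a ∧ g i₁ = b := by
  classical
  let S : Setoid Ω := ⟨r, hr⟩
  have mk_ne {x y : Ω} (h : ¬ r x y) : (⟦x⟧ : Quotient S) ≠ ⟦y⟧ := fun e => h (Quotient.exact e)
  -- Permute the blocks of `f` so that those of `i₀, i₁` become those of `a, b`, then pick
  -- representatives, taking `a` and `b` themselves in their blocks.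
  obtain ⟨π, hπ₀, hπ₁⟩ := is_two_pretransitive_iff.mp
    (Equiv.Perm.isMultiplyPretransitive (Quotient S) 2) (mk_ne (hf hi)) (mk_ne hab)
  rw [Equiv.Perm.smul_def] at hπ₀ hπ₁
  let rep : Quotient S → Ω := update (update Quotient.out ⟦a⟧ a) ⟦b⟧ b
  have mk_rep (q : Quotient S) : ⟦rep q⟧ = q := by
    by_cases hb : q = ⟦b⟧
    · simp [rep, hb]
    by_cases ha : q = ⟦a⟧
    · subst ha
      simp [rep, hb]
    · simp [rep, hb, ha, Quotient.out_eq]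
  refine ⟨fun i => rep (π ⟦f i⟧), fun i j hij hrel => hf hij ?_, ?_, ?_⟩
  · have hq : (⟦rep (π ⟦f i⟧)⟧ : Quotient S) = ⟦rep (π ⟦f j⟧)⟧ := Quotient.sound hrel
    rw [mk_rep, mk_rep] at hq
    exact Quotient.exact (π.injective hq)
  · simp [hπ₀, rep, mk_ne hab]
  · simp [hπ₁, rep]

variable {G : Type*} [Group G] [MulAction G Ω]

theorem exists_smul_eq_pair_of_not_rel (hr : Equivalence r) {ι : Type*} {i₀ i₁ : ι}
    (hi : i₀ ≠ i₁) (hblocks : ∃ f : ι → Ω, Pairwise fun i j => ¬ r (f i) (f j))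
    (htrans : ∀ f g : ι → Ω, (Pairwise fun i j => ¬ r (f i) (f j)) →
      (Pairwise fun i j => ¬ r (g i) (g j)) → ∃ σ : G, ∀ i, σ • f i = g i)
    (a b c d : Ω) (hab : ¬ r a b) (hcd : ¬ r c d) :
    ∃ σ : G, σ • a = c ∧ σ • b = d := by
  obtain ⟨f, hf⟩ := hblocks
  obtain ⟨u, hu, hu₀, hu₁⟩ := hr.exists_pairwise_not_rel_extending_pair hf hi hab
  obtain ⟨v, hv, hv₀, hv₁⟩ := hr.exists_pairwise_not_rel_extending_pair hf hi hcd
  obtain ⟨σ, hσ⟩ := htrans u v hu hv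
  exact ⟨σ, by rw [← hu₀, hσ, hv₀], by rw [← hu₁, hσ, hv₁]⟩

theorem Subgroup.mem_of_smul_eq_smul_of_stabilizer_le {H : Subgroup G} {ω : Ω}
    (hH : stabilizer G ω ≤ H) {g σ : G} (hσ : σ ∈ H) (hg : g • ω = σ • ω) : g ∈ H := by
  have hστ_mem : σ⁻¹ * g ∈ stabilizer G ω := by
    rw [mem_stabilizer_iff, mul_smul, hg, inv_smul_smul]
  simpa using H.mul_mem hσ (hH hστ_mem)

theorem Subgroup.eq_top_of_stabilizer_le_of_not_rel (hr : Equivalence r)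
    (hpairs : ∀ a b c d : Ω, ¬ r a b → ¬ r c d → ∃ σ : G, σ • a = c ∧ σ • b = d)
    {H : Subgroup G} {ω : Ω} (hH : stabilizer G ω ≤ H) {h : G} (hh : h ∈ H)
    (hhω : ¬ r (h • ω) ω) : H = ⊤ := by
  have hωh : ¬ r ω (h • ω) := fun e => hhω (hr.symm e)
  refine (Subgroup.eq_top_iff' H).mpr fun g => ?_
  obtain ⟨σ, hσ, hσg⟩ : ∃ σ ∈ H, σ • h • ω = g • ω := by
    by_cases hg : r (g • ω) ω
    · obtain ⟨σ, hσω, hσh⟩ := hpairs _ _ _ _ hωh fun e => hhω (hr.trans e hg)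
      exact ⟨σ, mem_of_smul_eq_smul_of_stabilizer_le hH hh hσω, hσh⟩
    · obtain ⟨σ, hσω, hσh⟩ := hpairs _ _ ω _ hωh fun e => hg (hr.symm e)
      exact ⟨σ, hH hσω, hσh⟩
  exact mem_of_smul_eq_smul_of_stabilizer_le hH (H.mul_mem hσ hh) (by rw [mul_smul, hσg])

end BlockTuples

theorem stmt_2_general {G Ω : Type*} [Group G] [MulAction G Ω]
    (r : Ω → Ω → Prop) (hequiv : Equivalence r)
    (k : ℕ) (hk : 2 ≤ k)
    (hblocks : ∃ f : Fin k → Ω, ∀ i j, i ≠ j → ¬ r (f i) (f j))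
    (htrans : ∀ f g : Fin k → Ω, (∀ i j, i ≠ j → ¬ r (f i) (f j)) →
      (∀ i j, i ≠ j → ¬ r (g i) (g j)) → ∃ σ : G, ∀ i, σ • f i = g i)
    (ω : Ω) (H : Subgroup G)
    (hH1 : MulAction.stabilizer G ω ≤ H) (hH2 : H ≠ ⊤) :
    ∀ h ∈ H, r (h • ω) ω := by
  intro h hh
  by_contra hhω
  have hpairs := exists_smul_eq_pair_of_not_rel (G := G) hequiv
    (i₀ := ⟨0, by omega⟩) (i₁ := ⟨1, by omega⟩) (by simp [Fin.ext_iff]) hblocks htrans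
  exact hH2 (Subgroup.eq_top_of_stabilizer_le_of_not_rel hequiv hpairs hH1 hh hhω)

/-- Lemma 2.3: the block stabilizer is the largest proper subgroup containing
the point stabilizer, for a `k`-by-block-transitive action with `k ≥ 2`. -/
theorem stmt_2 {G Ω : Type*} [Group G] [MulAction G Ω] [FaithfulSMul G Ω]
    (r : Ω → Ω → Prop) (hequiv : Equivalence r)
    (k : ℕ) (hk : 2 ≤ k)
    (hinv : ∀ (g : G) (x y : Ω), r x y → r (g • x) (g • y))
    (hblocks : ∃ f : Fin k → Ω, ∀ i j, i ≠ j → ¬ r (f i) (f j))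
    (htrans : ∀ f g : Fin k → Ω, (∀ i j, i ≠ j → ¬ r (f i) (f j)) →
      (∀ i j, i ≠ j → ¬ r (g i) (g j)) → ∃ σ : G, ∀ i, σ • f i = g i)
    (ω : Ω) (H : Subgroup G)
    (hH1 : MulAction.stabilizer G ω ≤ H) (hH2 : H ≠ ⊤) :
    ∀ h ∈ H, r (h • ω) ω :=
  stmt_2_general r hequiv k hk hblocks htrans ω H hH1 hH2
end

section
/- Let G ≤ Sym(Ω) be block-faithful and k-by-block-transitive (k ≥ 2) with respect to a nontrivial equivalence relation ∼ (blocks have size at least 2), and let N be a nontrivial normal subgroup of G. Then G = N·G(ω) for any ω ∈ Ω, and N is not abelian. -/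
/-!
Extending pairs of points in distinct blocks to `k`-tuples in distinct blocks shows that `G` is
2-by-block transitive. Conjugates of an element of `N` that moves some block then carry any point
to any point of any other block, so with at least two blocks `N` is transitive, whence
`G = N·G(ω)`. If `N` were abelian, an element `t ∈ N` sending `ω` to another point of its block
would send each `m • ω` (`m ∈ N`) to `m • t • ω`, a point of the same block; so `t` would fix
every block, and block-faithfulness forces `t = 1`.
-/

section Blocks

variable {Ω : Type*} (s : Setoid Ω)

theorem injective_mk_comp_iff_pairwise {ι : Type*} {p : ι → Ω} :
    Function.Injective (Quotient.mk s ∘ p) ↔ Pairwise fun i j => ¬ s (p i) (p j) :=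
  ⟨fun h _ _ hij hr => hij (h (Quotient.sound hr)),
    fun h _ _ hij => h.eq fun hr => hr (Quotient.exact hij)⟩

theorem mk_extend_mk_comp_out {ι : Type*} (p : ι → Ω) (X : Quotient s) :
    Quotient.mk s (Function.extend (Quotient.mk s ∘ p) p Quotient.out X) = X := by
  classical
  rw [Function.extend_def]
  split_ifs with h
  · exact h.choose_spec
  · exact Quotient.out_eq X

theorem exists_extend_of_pairwise_not_rel {m k : ℕ} (hmk : m ≤ k) {f : Fin k → Ω}
    (hf : Pairwise fun i j => ¬ s (f i) (f j)) {p : Fin m → Ω}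
    (hp : Pairwise fun i j => ¬ s (p i) (p j)) :
    ∃ q : Fin k → Ω, (Pairwise fun i j => ¬ s (q i) (q j)) ∧ ∀ i, q (Fin.castLE hmk i) = p i := by
  have hcard : (k : ℕ∞) ≤ ENat.card (Quotient s) := by
    simpa using ENat.card_le_card_of_injective ((injective_mk_comp_iff_pairwise s).2 hf)
  have hp' := (injective_mk_comp_iff_pairwise s).2 hp
  obtain ⟨y, hy⟩ := Fin.Embedding.restrictSurjective_of_le_ENatCard hmk hcard ⟨_, hp'⟩
  -- a section of `Quotient.mk s` through the points of `p`
  set ℓ := Function.extend (Quotient.mk s ∘ p) p Quotient.out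
  refine ⟨ℓ ∘ y, (injective_mk_comp_iff_pairwise s).1 ?_, fun i => ?_⟩
  · convert y.injective using 1
    exact funext fun X => mk_extend_mk_comp_out s p (y X)
  · have : y (Fin.castLE hmk i) = Quotient.mk s (p i) := DFunLike.congr_fun hy i
    simp only [Function.comp_apply, this, ℓ]
    exact hp'.extend_apply p _ i

theorem pairwise_not_rel_vecCons {a b : Ω} (hab : ¬ s a b) :
    Pairwise fun i j => ¬ s (![a, b] i) (![a, b] j) := by
  intro i j hij
  fin_cases i <;> fin_cases j <;> simp_all [Setoid.comm']

end Blocks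

section BlockTransitive

variable {G Ω : Type*} [Group G] [MulAction G Ω] (s : Setoid Ω)

theorem exists_smul_eq_of_le {m k : ℕ} (hmk : m ≤ k)
    (hblocks : ∃ f : Fin k → Ω, Pairwise fun i j => ¬ s (f i) (f j))
    (htrans : ∀ f g : Fin k → Ω, (Pairwise fun i j => ¬ s (f i) (f j)) →
      (Pairwise fun i j => ¬ s (g i) (g j)) → ∃ σ : G, ∀ i, σ • f i = g i)
    {p p' : Fin m → Ω} (hp : Pairwise fun i j => ¬ s (p i) (p j))
    (hp' : Pairwise fun i j => ¬ s (p' i) (p' j)) :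
    ∃ σ : G, ∀ i, σ • p i = p' i := by
  obtain ⟨f, hf⟩ := hblocks
  obtain ⟨q, hq, hqp⟩ := exists_extend_of_pairwise_not_rel s hmk hf hp
  obtain ⟨q', hq', hqp'⟩ := exists_extend_of_pairwise_not_rel s hmk hf hp'
  obtain ⟨σ, hσ⟩ := htrans q q' hq hq'
  exact ⟨σ, fun i => by rw [← hqp, hσ, hqp']⟩

theorem exists_smul_eq_smul_eq_of_not_rel {k : ℕ} (hk : 2 ≤ k)
    (hblocks : ∃ f : Fin k → Ω, Pairwise fun i j => ¬ s (f i) (f j))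
    (htrans : ∀ f g : Fin k → Ω, (Pairwise fun i j => ¬ s (f i) (f j)) →
      (Pairwise fun i j => ¬ s (g i) (g j)) → ∃ σ : G, ∀ i, σ • f i = g i)
    {a b c d : Ω} (hab : ¬ s a b) (hcd : ¬ s c d) :
    ∃ σ : G, σ • a = c ∧ σ • b = d := by
  obtain ⟨σ, hσ⟩ := exists_smul_eq_of_le s hk hblocks htrans
    (pairwise_not_rel_vecCons s hab) (pairwise_not_rel_vecCons s hcd)
  exact ⟨σ, hσ 0, hσ 1⟩

end BlockTransitive

section NormalSubgroup

variable {G Ω : Type*} [Group G] [MulAction G Ω] (s : Setoid Ω) {N : Subgroup G}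

theorem Subgroup.Normal.exists_mem_smul_eq_of_not_rel (hN : N.Normal)
    (h2 : ∀ a b c d : Ω, ¬ s a b → ¬ s c d → ∃ σ : G, σ • a = c ∧ σ • b = d)
    {n : G} (hn : n ∈ N) {x₀ : Ω} (hx₀ : ¬ s x₀ (n • x₀)) {x y : Ω} (hxy : ¬ s x y) :
    ∃ m ∈ N, m • x = y := by
  obtain ⟨σ, rfl, rfl⟩ := h2 _ _ _ _ hx₀ hxy
  exact ⟨σ * n * σ⁻¹, hN.conj_mem n hn σ, by simp [mul_smul]⟩

theorem exists_mem_smul_eq_of_forall_not_rel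
    (hmove : ∀ x y : Ω, ¬ s x y → ∃ m ∈ N, m • x = y) {u v : Ω} (huv : ¬ s u v) (x y : Ω) :
    ∃ m ∈ N, m • x = y := by
  by_cases hxy : s x y
  · obtain ⟨z, hxz⟩ : ∃ z, ¬ s x z := by
      by_contra! h
      exact huv (s.trans (s.symm (h u)) (h v))
    obtain ⟨m₁, hm₁, rfl⟩ := hmove x z hxz
    obtain ⟨m₂, hm₂, rfl⟩ := hmove (m₁ • x) y fun h => hxz (s.trans hxy (s.symm h))
    exact ⟨m₂ * m₁, N.mul_mem hm₂ hm₁, mul_smul _ _ _⟩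
  · exact hmove x y hxy

theorem exists_mem_mul_eq_of_forall_exists_mem_smul_eq
    (htransN : ∀ x y : Ω, ∃ m ∈ N, m • x = y) (ω : Ω) (g : G) :
    ∃ m ∈ N, ∃ h : G, h • ω = ω ∧ g = m * h := by
  obtain ⟨m, hm, hmω⟩ := htransN ω (g • ω)
  exact ⟨m, hm, m⁻¹ * g, by rw [mul_smul, ← hmω, inv_smul_smul], by group⟩

theorem smul_rel_self_of_forall_commute
    (hinv : ∀ (g : G) (x y : Ω), s x y → s (g • x) (g • y))
    (hcomm : ∀ a ∈ N, ∀ b ∈ N, a * b = b * a) (htransN : ∀ x y : Ω, ∃ m ∈ N, m • x = y)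
    {t : G} (ht : t ∈ N) {ω : Ω} (htω : s (t • ω) ω) (x : Ω) : s (t • x) x := by
  obtain ⟨m, hm, rfl⟩ := htransN ω x
  rw [← mul_smul, hcomm t ht m hm, mul_smul]
  exact hinv m _ _ htω

end NormalSubgroup

/-- Corollary 2.4: in a block-faithful `k`-by-block-transitive action with
nontrivial blocks, any nontrivial normal subgroup `N` satisfies `G = N·G(ω)`,
and `N` is not abelian. -/
theorem stmt_3 {G Ω : Type*} [Group G] [MulAction G Ω]
    (r : Ω → Ω → Prop) (hequiv : Equivalence r)
    (k : ℕ) (hk : 2 ≤ k)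
    (hinv : ∀ (g : G) (x y : Ω), r x y → r (g • x) (g • y))
    (hblocks : ∃ f : Fin k → Ω, ∀ i j, i ≠ j → ¬ r (f i) (f j))
    (htrans : ∀ f g : Fin k → Ω, (∀ i j, i ≠ j → ¬ r (f i) (f j)) →
      (∀ i j, i ≠ j → ¬ r (g i) (g j)) → ∃ σ : G, ∀ i, σ • f i = g i)
    (hfaithful : ∀ g : G, (∀ x : Ω, r (g • x) x) → g = 1)
    (hnontrivblocks : ∀ x : Ω, ∃ y : Ω, y ≠ x ∧ r x y)
    (N : Subgroup G) (hN : N.Normal) (hNnontriv : N ≠ ⊥) (ω : Ω) :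
    (∀ g : G, ∃ m ∈ N, ∃ h : G, h • ω = ω ∧ g = m * h) ∧
    (∃ a ∈ N, ∃ b ∈ N, a * b ≠ b * a) := by
  let s : Setoid Ω := ⟨r, hequiv⟩
  have h2 : ∀ a b c d : Ω, ¬ r a b → ¬ r c d → ∃ σ : G, σ • a = c ∧ σ • b = d :=
    fun _ _ _ _ => exists_smul_eq_smul_eq_of_not_rel s hk hblocks htrans
  obtain ⟨n, hn, hn1⟩ := N.bot_or_exists_ne_one.resolve_left hNnontriv
  obtain ⟨x₀, hx₀⟩ : ∃ x₀, ¬ r x₀ (n • x₀) := by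
    by_contra! h
    exact hn1 (hfaithful n fun x => hequiv.symm (h x))
  obtain ⟨f, hf⟩ := hblocks
  have htransN := exists_mem_smul_eq_of_forall_not_rel s
    (fun _ _ => hN.exists_mem_smul_eq_of_not_rel s h2 hn hx₀)
    (hf ⟨0, by omega⟩ ⟨1, by omega⟩ (by simp))
  refine ⟨exists_mem_mul_eq_of_forall_exists_mem_smul_eq htransN ω, ?_⟩
  by_contra! hcomm
  obtain ⟨y, hyω, hωy⟩ := hnontrivblocks ω
  obtain ⟨t, ht, rfl⟩ := htransN ω y
  have ht1 := hfaithful t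
    (smul_rel_self_of_forall_commute s hinv hcomm htransN ht (hequiv.symm hωy))
  exact hyω (by rw [ht1, one_smul])
end

section
/- Let G be a finite group, α an automorphism of G, and H ≤ G with α(H)·H = G. If M is a normal α-invariant subgroup of G with G/M cyclic, then G = M·H. -/
/-!
Every endomorphism of a cyclic group is a power map, so it maps each subgroup into itself.
Applied to the automorphism of `G ⧸ M` induced by `α`, this shows that `α` maps `M ⊔ H`, the
preimage of the image of `H`, into itself. Hence `α(H) ≤ M ⊔ H`, and `G = α(H) H ≤ M ⊔ H = M H`.
-/

namespace Subgroup

theorem map_le_self_of_isCyclic {Q : Type*} [Group Q] [IsCyclic Q] (σ : Q →* Q)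
    (K : Subgroup Q) : K.map σ ≤ K := by
  obtain ⟨m, hm⟩ := σ.map_cyclic
  rintro _ ⟨x, hx, rfl⟩
  rw [hm]
  exact K.zpow_mem hx m

theorem map_le_sup_of_isCyclic_quotient {G : Type*} [Group G] {M : Subgroup G} [M.Normal]
    [IsCyclic (G ⧸ M)] (f : G →* G) (hf : M ≤ M.comap f) (L : Subgroup G) :
    L.map f ≤ M ⊔ L := by
  let σ : G ⧸ M →* G ⧸ M := QuotientGroup.map M M f hf
  have hσ : (L.map (QuotientGroup.mk' M)).map σ ≤ L.map (QuotientGroup.mk' M) :=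
    map_le_self_of_isCyclic σ _
  rintro _ ⟨x, hx, rfl⟩
  have hfx : QuotientGroup.mk' M (f x) ∈ L.map (QuotientGroup.mk' M) :=
    hσ ⟨_, ⟨x, hx, rfl⟩, rfl⟩
  rwa [← mem_comap, comap_map_eq, QuotientGroup.ker_mk', sup_comm] at hfx

end Subgroup

theorem stmt_4_general {G : Type*} [Group G] (α : G ≃* G)
    (H M : Subgroup G) [hM : M.Normal]
    (hfact : ∀ g : G, ∃ a ∈ H.map α.toMonoidHom, ∃ b ∈ H, g = a * b)
    (hMα : M.map α.toMonoidHom = M)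
    (hcyc : IsCyclic (G ⧸ M)) :
    ∀ g : G, ∃ m ∈ M, ∃ b ∈ H, g = m * b := by
  intro g
  obtain ⟨a, ha, b, hb, rfl⟩ := hfact g
  have hαM : M ≤ M.comap α.toMonoidHom := Subgroup.map_le_iff_le_comap.mp hMα.le
  have haMH : a ∈ M ⊔ H := Subgroup.map_le_sup_of_isCyclic_quotient _ hαM H ha
  obtain ⟨m, hm, c, hc, hmc⟩ :=
    Subgroup.mem_sup_of_normal_left.mp ((M ⊔ H).mul_mem haMH (Subgroup.mem_sup_right hb))
  exact ⟨m, hm, c, hc, hmc.symm⟩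

/-- Lemma (abelian intersection, part (i)): if `α(H)H = G` and `M ⊴ G` is
`α`-invariant with `G/M` cyclic, then `G = MH`. -/
theorem stmt_4 {G : Type*} [Group G] [Finite G] (α : G ≃* G)
    (H M : Subgroup G) [hM : M.Normal]
    (hfact : ∀ g : G, ∃ a ∈ H.map α.toMonoidHom, ∃ b ∈ H, g = a * b)
    (hMα : M.map α.toMonoidHom = M)
    (hcyc : IsCyclic (G ⧸ M)) :
    ∀ g : G, ∃ m ∈ M, ∃ b ∈ H, g = m * b :=
  stmt_4_general α H M (hM := hM) hfact hMα hcyc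
end

section
/- Let G be a finite group, α an automorphism of G, and H ≤ G with α(H)·H = G. Suppose H ∩ D is α-invariant, where D is the derived subgroup of G. Then N := H ∩ α(H) is a normal subgroup of G, and |G/N| = n², where n = |H : N|. -/
/-!
Write `K = α(H)` and `D = [G, G]`. Since `D` is characteristic, `α(H ∩ D) = K ∩ D`, so the
hypothesis says `H ∩ D = K ∩ D`. For `h ∈ H` and `n ∈ H ∩ K` we have `h n h⁻¹ = ⁅h, n⁆ n` with
`⁅h, n⁆ ∈ H ∩ D ⊆ K`, so `H` normalizes `H ∩ K`; symmetrically so does `K`, hence all of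
`G = KH` does. Since `G = KH = HK`, the index of `H ∩ K` in `H` is `|G : K|`, its index in `K`
is `|G : H|`, and `|G : K| = |G : H|` because `α` is an automorphism.
-/

open scoped commutatorElement Pointwise

namespace Subgroup

variable {G : Type*} [Group G] {H K : Subgroup G}

lemma coe_mul_coe_eq_univ_comm (h : (H : Set G) * (K : Set G) = Set.univ) :
    (K : Set G) * (H : Set G) = Set.univ := by
  simpa only [mul_inv_rev, inv_coe_set, Set.inv_univ] using congrArg Inv.inv h

lemma sup_eq_top_of_coe_mul_eq_univ (h : (H : Set G) * (K : Set G) = Set.univ) : H ⊔ K = ⊤ :=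
  eq_top_iff.2 fun g _ => by
    obtain ⟨a, ha, b, hb, rfl⟩ := h.symm ▸ Set.mem_univ g
    exact mul_mem_sup ha hb

/-- Every left coset of `K` meets `H`, so `H ⧸ (H ⊓ K) → G ⧸ K` is onto. -/
lemma relIndex_eq_index_of_coe_mul_eq_univ (h : (H : Set G) * (K : Set G) = Set.univ) :
    K.relIndex H = K.index := by
  rw [← relIndex_top_right]
  refine Nat.card_congr (Equiv.ofBijective (quotientSubgroupOfEmbeddingOfLE K le_top)
    ⟨(quotientSubgroupOfEmbeddingOfLE K le_top).injective, ?_⟩)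
  rintro ⟨⟨g, -⟩⟩
  obtain ⟨a, ha, b, hb, rfl⟩ := h.symm ▸ Set.mem_univ g
  refine ⟨QuotientGroup.mk ⟨a, ha⟩, QuotientGroup.eq.2 ?_⟩
  simpa [mem_subgroupOf] using hb

lemma index_inf_eq_relIndex_sq (h : (K : Set G) * (H : Set G) = Set.univ)
    (hindex : K.index = H.index) :
    (H ⊓ K).index = (H ⊓ K).relIndex H ^ 2 := by
  have hH : H.relIndex K = H.index := relIndex_eq_index_of_coe_mul_eq_univ h
  have hK : K.relIndex H = K.index :=
    relIndex_eq_index_of_coe_mul_eq_univ (coe_mul_coe_eq_univ_comm h)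
  rw [← relIndex_mul_index inf_le_right, inf_relIndex_right, inf_relIndex_left, hH, hK, hindex, sq]

lemma le_normalizer_inf_of_inf_commutator_le (h : H ⊓ _root_.commutator G ≤ K) :
    H ≤ normalizer (H ⊓ K : Subgroup G) := by
  rw [le_normalizer_iff_commutator_le_right, commutator_le]
  intro b hb n hn
  have hbn : ⁅b, n⁆ ∈ H := by
    rw [commutatorElement_def]
    exact mul_mem (mul_mem (mul_mem hb hn.1) (inv_mem hb)) (inv_mem hn.1)
  exact ⟨hbn, h ⟨hbn, commutator_mem_commutator (mem_top b) (mem_top n)⟩⟩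

lemma normal_inf_of_inf_commutator_eq (hD : H ⊓ _root_.commutator G = K ⊓ _root_.commutator G)
    (hHK : H ⊔ K = ⊤) : (H ⊓ K).Normal := by
  rw [← normalizer_eq_top_iff, eq_top_iff, ← hHK]
  refine sup_le (le_normalizer_inf_of_inf_commutator_le (hD ▸ inf_le_left)) ?_
  rw [inf_comm]
  exact le_normalizer_inf_of_inf_commutator_le (hD.symm ▸ inf_le_left)

end Subgroup

open Subgroup in
theorem stmt_5_general {G : Type*} [Group G] (α : G ≃* G)
    (H : Subgroup G)
    (hfact : ∀ g : G, ∃ a ∈ H.map α.toMonoidHom, ∃ b ∈ H, g = a * b)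
    (hHD : α '' ((H : Set G) ∩ (commutator G : Set G)) =
      (H : Set G) ∩ (commutator G : Set G)) :
    (H ⊓ H.map α.toMonoidHom).Normal ∧
    (H ⊓ H.map α.toMonoidHom).index = ((H ⊓ H.map α.toMonoidHom).relIndex H) ^ 2 := by
  have hmul : (H.map α.toMonoidHom : Set G) * (H : Set G) = Set.univ :=
    Set.eq_univ_of_forall fun g => by
      obtain ⟨a, ha, b, hb, rfl⟩ := hfact g
      exact Set.mul_mem_mul ha hb
  have hD : (H ⊓ commutator G).map α.toMonoidHom = H ⊓ commutator G :=
    SetLike.coe_injective (by rw [coe_map]; exact hHD)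
  rw [map_inf_eq _ _ _ α.injective,
    (characteristic_iff_map_eq (H := commutator G)).mp inferInstance α] at hD
  exact ⟨normal_inf_of_inf_commutator_eq hD.symm
      (sup_eq_top_of_coe_mul_eq_univ (coe_mul_coe_eq_univ_comm hmul)),
    index_inf_eq_relIndex_sq hmul (index_map_equiv H α)⟩

/-- Lemma (abelian intersection, part (ii)): if `α(H)H = G` and `H ∩ [G,G]` is
`α`-invariant, then `N = H ∩ α(H)` is normal in `G` and `|G/N| = |H:N|²`. -/
theorem stmt_5 {G : Type*} [Group G] [Finite G] (α : G ≃* G)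
    (H : Subgroup G)
    (hfact : ∀ g : G, ∃ a ∈ H.map α.toMonoidHom, ∃ b ∈ H, g = a * b)
    (hHD : α '' ((H : Set G) ∩ (commutator G : Set G)) =
      (H : Set G) ∩ (commutator G : Set G)) :
    (H ⊓ H.map α.toMonoidHom).Normal ∧
    (H ⊓ H.map α.toMonoidHom).index = ((H ⊓ H.map α.toMonoidHom).relIndex H) ^ 2 :=
  stmt_5_general α H hfact hHD
end

section
/- Let G be a finite group with an abelian normal subgroup A such that G/A is cyclic, and suppose G admits an automorphism s of order 2 normalizing A. If there exists a subgroup H ≤ G with H ∩ A = {1} and G = (sHs)·H (working inside G ⋊ ⟨s⟩), then A has a cyclic subgroup of index at most 2. -/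
set_option linter.unusedSectionVars false

open Finset

namespace Stmt6Aux

variable {M : Type*} [CommGroup M]

/-- The "difference" endomorphism `x ↦ w x * x⁻¹`. -/
def dmap (w : M ≃* M) : Monoid.End M :=
  MonoidHom.mk' (fun x => w x * x⁻¹) (by
    intro a b
    simp only [map_mul, mul_inv]
    exact mul_mul_mul_comm _ _ _ _)

lemma dmap_apply (w : M ≃* M) (x : M) : dmap w x = w x * x⁻¹ := rfl

lemma dmap_spec (w : M ≃* M) (x : M) : w x = x * dmap w x := by
  rw [dmap_apply, mul_comm x, inv_mul_cancel_right]

lemma end_pow_succ (E : Monoid.End M) (j : ℕ) (x : M) :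
    (E ^ (j + 1)) x = (E ^ j) (E x) := by
  rw [pow_succ]; rfl

lemma end_pow_succ' (E : Monoid.End M) (j : ℕ) (x : M) :
    (E ^ (j + 1)) x = E ((E ^ j) x) := by
  rw [pow_succ']; rfl

lemma end_pow_add (E : Monoid.End M) (i j : ℕ) (x : M) :
    (E ^ (i + j)) x = (E ^ i) ((E ^ j) x) := by
  rw [pow_add]; rfl

lemma dmap_pow_one_of_le {w : M ≃* M} {b : M} {m : ℕ} (hm : (dmap w ^ m) b = 1)
    {k : ℕ} (hk : m ≤ k) : (dmap w ^ k) b = 1 := by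
  obtain ⟨l, rfl⟩ := Nat.exists_eq_add_of_le hk
  rw [add_comm, end_pow_add, hm, map_one]

lemma aut_pow_succ (w : M ≃* M) (i : ℕ) (x : M) :
    (w ^ (i + 1)) x = w ((w ^ i) x) := by
  rw [pow_succ']; rfl

lemma aut_pow_add (w : M ≃* M) (i j : ℕ) (x : M) :
    (w ^ (i + j)) x = (w ^ i) ((w ^ j) x) := by
  rw [pow_add]; rfl

/-- Binomial expansion of the automorphism power in terms of `dmap`. -/
lemma aut_pow_expand (w : M ≃* M) (i : ℕ) (x : M) :
    (w ^ i) x = ∏ j ∈ range (i + 1), ((dmap w ^ j) x) ^ (i.choose j) := by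
  induction i with
  | zero => simp
  | succ i ih =>
    set g : ℕ → M := fun j => (dmap w ^ j) x with hg
    have hT : ∏ j ∈ range (i + 2), g j ^ ((i+1).choose j)
        = ((∏ j ∈ range (i+1), g (j+1) ^ (i.choose j))
            * ∏ j ∈ range (i+1), g (j+1) ^ (i.choose (j+1))) * x := by
      rw [Finset.prod_range_succ' (fun j => g j ^ ((i+1).choose j))]
      have : ∀ j ∈ range (i+1), g (j+1) ^ ((i+1).choose (j+1))
          = g (j+1) ^ (i.choose j) * g (j+1) ^ (i.choose (j+1)) := by
        intro j _
        rw [Nat.choose_succ_succ', pow_add, mul_comm]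
      rw [Finset.prod_congr rfl this, Finset.prod_mul_distrib]
      simp [hg]
    have hB : ∏ j ∈ range (i + 1), g j ^ (i.choose j)
        = (∏ j ∈ range (i+1), g (j+1) ^ (i.choose (j+1))) * x := by
      rw [Finset.prod_range_succ' (fun j => g j ^ (i.choose j))]
      have : ∏ j ∈ range (i+1), g (j+1) ^ (i.choose (j+1))
          = ∏ j ∈ range i, g (j+1) ^ (i.choose (j+1)) := by
        rw [Finset.prod_range_succ, Nat.choose_succ_self, pow_zero, mul_one]
      rw [this]
      simp [hg]
    have hL : (w ^ (i+1)) x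
        = (∏ j ∈ range (i + 1), g j ^ (i.choose j))
            * ∏ j ∈ range (i+1), g (j+1) ^ (i.choose j) := by
      rw [aut_pow_succ, ih, map_prod]
      have : ∀ j ∈ range (i+1), w (g j ^ (i.choose j))
          = g j ^ (i.choose j) * g (j+1) ^ (i.choose j) := by
        intro j _
        rw [map_pow, dmap_spec w (g j), mul_pow, hg]
        simp only []
        rw [end_pow_succ']
      rw [Finset.prod_congr rfl this, Finset.prod_mul_distrib]
    rw [hT, hL, hB]
    ac_rfl


section Cocycle

variable {w : M ≃* M} {b : M} {f : ℕ → M}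
  (hf0 : f 0 = 1) (hfs : ∀ i, f (i + 1) = f i * (w ^ i) b)

include hf0 hfs

lemma f_add (i j : ℕ) : f (i + j) = f i * (w ^ i) (f j) := by
  induction j with
  | zero => simp [hf0]
  | succ j ih =>
    rw [← add_assoc, hfs, ih, hfs j, map_mul, ← aut_pow_add, mul_assoc]

lemma f_expand (i : ℕ) : f i = ∏ j ∈ range i, ((dmap w ^ j) b) ^ (i.choose (j + 1)) := by
  induction i with
  | zero => simp [hf0]
  | succ i ih =>
    rw [hfs, ih, aut_pow_expand]
    have h1 : ∏ j ∈ range i, ((dmap w ^ j) b) ^ (i.choose (j + 1))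
        = ∏ j ∈ range (i+1), ((dmap w ^ j) b) ^ (i.choose (j + 1)) := by
      rw [Finset.prod_range_succ, Nat.choose_succ_self, pow_zero, mul_one]
    rw [h1, ← Finset.prod_mul_distrib]
    refine Finset.prod_congr rfl fun j _ => ?_
    rw [← pow_add, Nat.choose_succ_succ']
    exact congrArg _ (Nat.add_comm _ _)

lemma f_sub_root {i j : ℕ} (hij : i ≤ j) (hf : f i = f j) : f (j - i) = 1 := by
  have h := f_add hf0 hfs i (j - i)
  rw [Nat.add_sub_cancel' hij, ← hf, left_eq_mul] at h
  exact (EmbeddingLike.map_eq_one_iff).mp h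

variable [Finite M] (hsurj : ∀ m : M, ∃ i, f i = m)

lemma f_exists_root : ∃ k, 0 < k ∧ f k = 1 := by
  obtain ⟨i, j, hne, hf⟩ := Finite.exists_ne_map_eq_of_infinite f
  rcases Nat.lt_trichotomy i j with h | h | h
  · exact ⟨j - i, Nat.sub_pos_of_lt h, f_sub_root hf0 hfs h.le hf⟩
  · exact absurd h hne
  · exact ⟨i - j, Nat.sub_pos_of_lt h, f_sub_root hf0 hfs h.le hf.symm⟩

include hsurj

lemma card_le_of_root {k : ℕ} (hk0 : 0 < k) (hk : f k = 1) : Nat.card M ≤ k := by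
  have hper : ∀ i, f (i + k) = f i := by
    intro i
    rw [f_add hf0 hfs, hk, map_one, mul_one]
  have key : ∀ i, ∃ v : Fin k, f ↑v = f i := by
    intro i
    induction i using Nat.strong_induction_on with
    | _ i ih =>
      rcases Nat.lt_or_ge i k with h | h
      · exact ⟨⟨i, h⟩, rfl⟩
      · obtain ⟨i', rfl⟩ := Nat.exists_eq_add_of_le h
        obtain ⟨v, hv⟩ := ih i' (by omega)
        refine ⟨v, ?_⟩
        rw [hv, add_comm, hper i']
  have hsur : Function.Surjective (fun i : Fin k => f i) := by
    intro m
    obtain ⟨i, rfl⟩ := hsurj m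
    exact key i
  simpa using Nat.card_le_card_of_surjective _ hsur

lemma card_root_spec :
    f (Nat.card M) = 1 ∧ (w ^ (Nat.card M) : M ≃* M) = 1 := by
  classical
  have hex := f_exists_root hf0 hfs
  set n := Nat.find hex with hn
  obtain ⟨hn0, hroot⟩ := Nat.find_spec hex
  have hcard_le : Nat.card M ≤ n := card_le_of_root hf0 hfs hsurj hn0 hroot
  have hinj : Function.Injective (fun i : Fin n => f i) := by
    rintro ⟨i, hi⟩ ⟨j, hj⟩ hf
    simp only at hf
    rcases Nat.lt_trichotomy i j with h | h | h
    · exfalso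
      have := f_sub_root hf0 hfs h.le hf
      exact Nat.find_min hex (m := j - i) (by omega) ⟨by omega, this⟩
    · exact Fin.ext h
    · exfalso
      have := f_sub_root hf0 hfs h.le hf.symm
      exact Nat.find_min hex (m := i - j) (by omega) ⟨by omega, this⟩
  have hle : n ≤ Nat.card M := by simpa using Nat.card_le_card_of_injective _ hinj
  have hcard : Nat.card M = n := le_antisymm hcard_le hle
  constructor
  · rw [hcard]; exact hroot
  · have hper : ∀ i, f (i + n) = f i := by
      intro i
      rw [f_add hf0 hfs, hroot, map_one, mul_one]
    rw [hcard]
    ext x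
    obtain ⟨i, rfl⟩ := hsurj x
    have h1 : f (n + i) = (w ^ n) (f i) := by
      rw [f_add hf0 hfs, hroot, one_mul]
    have h2 : f (n + i) = f i := by rw [add_comm]; exact hper i
    rw [← h1, h2]
    rfl

end Cocycle


section Prime

variable (w : M ≃* M)

lemma inj_aux {p : ℕ} (hp : p.Prime) (hpow : ∀ x : M, x ^ p = 1) :
    ∀ (m : ℕ) (b : M), (∀ k, k < m → (dmap w ^ k) b ≠ 1) → ((dmap w ^ m) b = 1) →
    ∀ c c' : ℕ → ℕ, (∀ j, c j < p) → (∀ j, c' j < p) →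
    (∏ j ∈ range m, ((dmap w ^ j) b) ^ (c j)) = (∏ j ∈ range m, ((dmap w ^ j) b) ^ (c' j)) →
    ∀ j, j < m → c j = c' j := by
  haveI : Fact p.Prime := ⟨hp⟩
  intro m
  induction m with
  | zero => intro b _ _ c c' _ _ _ j hj; omega
  | succ m ih =>
    intro b hlt hm c c' hc hc' heq j hj
    have hX : (dmap w ^ m) b ≠ 1 := hlt m (Nat.lt_succ_self m)
    have hhi : ∀ k, m + 1 ≤ k → (dmap w ^ k) b = 1 := fun k hk => dmap_pow_one_of_le hm hk
    have hc0 : c 0 = c' 0 := by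
      have happ := congrArg (dmap w ^ m) heq
      rw [map_prod, map_prod] at happ
      have hterm : ∀ (d : ℕ → ℕ), ∏ j ∈ range (m+1), (dmap w ^ m) (((dmap w ^ j) b) ^ (d j))
          = ((dmap w ^ m) b) ^ (d 0) := by
        intro d
        have h1 : ∀ j ∈ range (m+1), (dmap w ^ m) (((dmap w ^ j) b) ^ (d j))
            = (((dmap w ^ (m + j)) b) ^ (d j)) := by
          intro j _
          rw [map_pow, ← end_pow_add]
        rw [Finset.prod_congr rfl h1]
        have hsub : ({0} : Finset ℕ) ⊆ range (m+1) := by simp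
        rw [← Finset.prod_subset hsub (by
          intro j hjr hj0
          simp only [Finset.mem_singleton] at hj0
          have : m + 1 ≤ m + j := by omega
          rw [hhi _ this, one_pow])]
        simp
      rw [hterm c, hterm c'] at happ
      have hordX : orderOf ((dmap w ^ m) b) = p := orderOf_eq_prime (hpow _) hX
      have := pow_injOn_Iio_orderOf (x := (dmap w ^ m) b)
        (by rw [hordX]; exact hc 0) (by rw [hordX]; exact hc' 0) happ
      exact this
    rcases Nat.eq_zero_or_pos j with rfl | hj0
    · exact hc0
    · obtain ⟨j', rfl⟩ : ∃ j', j = j' + 1 := ⟨j - 1, by omega⟩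
      have hsplit : ∀ (d : ℕ → ℕ), ∏ j ∈ range (m+1), ((dmap w ^ j) b) ^ (d j)
          = (∏ j ∈ range m, ((dmap w ^ j) (dmap w b)) ^ (d (j+1))) * b ^ (d 0) := by
        intro d
        rw [Finset.prod_range_succ' (fun j => ((dmap w ^ j) b) ^ (d j))]
        congr 1
      rw [hsplit c, hsplit c', hc0] at heq
      have heq' := mul_right_cancel heq
      exact ih (dmap w b)
        (fun k hk => by rw [← end_pow_succ]; exact hlt (k+1) (by omega))
        (by rw [← end_pow_succ]; exact hm)
        (fun j => c (j+1)) (fun j => c' (j+1)) (fun j => hc _) (fun j => hc' _) heq' j' (by omega)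

lemma card_ge_pow [Finite M] {p : ℕ} (hp : p.Prime) (hpow : ∀ x : M, x ^ p = 1)
    {m : ℕ} {b : M} (hlt : ∀ k, k < m → (dmap w ^ k) b ≠ 1) (hm : (dmap w ^ m) b = 1) :
    p ^ m ≤ Nat.card M := by
  classical
  set ext : (Fin m → Fin p) → ℕ → ℕ := fun c j => if h : j < m then (c ⟨j, h⟩ : ℕ) else 0 with hext
  have hinj : Function.Injective (fun c : Fin m → Fin p =>
      ∏ j ∈ range m, ((dmap w ^ j) b) ^ (ext c j)) := by
    intro c c' heq
    have hb : ∀ (c : Fin m → Fin p) (j : ℕ), ext c j < p := by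
      intro c j
      rw [hext]
      dsimp only
      split
      · exact Fin.is_lt _
      · exact hp.pos
    have := inj_aux w hp hpow m b hlt hm (ext c) (ext c') (hb c) (hb c') heq
    funext ⟨j, hjm⟩
    have h2 := this j hjm
    rw [hext] at h2
    simp only [hjm, dif_pos] at h2
    exact Fin.ext h2
  have hcard := Nat.card_le_card_of_injective _ hinj
  calc p ^ m = Nat.card (Fin m → Fin p) := by
        simp [Nat.card_pi, Finset.prod_const]
    _ ≤ Nat.card M := hcard

lemma arith_three {p a : ℕ} (hp : 3 ≤ p) (ha : 2 ≤ a) : a < p ^ (a - 1) := by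
  induction a with
  | zero => omega
  | succ a iha =>
    rw [Nat.succ_sub_one]
    rcases Nat.lt_or_ge a 2 with h | h
    · interval_cases a
      · omega
      · simp; omega
    · have h1 := iha h
      have hk : 1 ≤ p ^ (a - 1) := Nat.one_le_pow _ _ (by omega)
      have h2 : p ^ (a - 1) * 3 ≤ p ^ (a - 1) * p := Nat.mul_le_mul_left _ hp
      have h3 : p ^ (a - 1) * p = p ^ a := by
        rw [← pow_succ]
        congr 1
        omega
      omega

lemma arith_two {a : ℕ} (ha : 3 ≤ a) : a < 2 ^ (a - 1) := by
  induction a with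
  | zero => omega
  | succ a iha =>
    rw [Nat.succ_sub_one]
    rcases Nat.lt_or_ge a 3 with h | h
    · interval_cases a
      · omega
      · omega
      · norm_num
    · have h1 := iha h
      have h3 : 2 ^ (a - 1) * 2 = 2 ^ a := by
        rw [← pow_succ]
        congr 1
        omega
      omega

end Prime


section MainPrime

variable {w : M ≃* M} {b : M} {f : ℕ → M}

/-- Key lemma for quotients of exponent `p`. -/
lemma lemB (hf0 : f 0 = 1) (hfs : ∀ i, f (i + 1) = f i * (w ^ i) b)
    [Finite M] (hsurj : ∀ m : M, ∃ i, f i = m)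
    {p : ℕ} (hp : p.Prime) (hpow : ∀ x : M, x ^ p = 1) :
    Nat.card M ≤ p ^ (if 2 < p then 1 else 2) ∧
      ∀ x : M, (dmap w ^ (if 2 < p then 1 else 2)) x = 1 := by
  classical
  haveI : Fact p.Prime := ⟨hp⟩
  have hP : IsPGroup p M := fun x => ⟨1, by simpa using hpow x⟩
  haveI : Fintype M := Fintype.ofFinite M
  obtain ⟨r, hr⟩ : ∃ r, Nat.card M = p ^ r := (IsPGroup.iff_card (p := p) (G := M)).mp hP
  have hw : (w ^ Nat.card M : M ≃* M) = 1 := (card_root_spec hf0 hfs hsurj).2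
  -- nilpotency of dmap
  have hEnil : ∀ x : M, (dmap w ^ (p ^ r)) x = 1 := by
    intro x
    have h1 : (w ^ (p ^ r)) x = x := by
      rw [← hr, hw]
      rfl
    rw [aut_pow_expand] at h1
    set n := p ^ r with hn
    have hn0 : 0 < n := pow_pos hp.pos r
    have hsub : ({0, n} : Finset ℕ) ⊆ range (n+1) := by
      intro j hj
      simp only [Finset.mem_insert, Finset.mem_singleton] at hj
      rcases hj with rfl | rfl <;> simp [Finset.mem_range] <;> omega
    rw [← Finset.prod_subset hsub (by
      intro j hj hnj
      simp only [Finset.mem_insert, Finset.mem_singleton, not_or] at hnj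
      obtain ⟨h0, hne⟩ := hnj
      have hdvd : p ∣ n.choose j := hp.dvd_choose_pow h0 hne
      obtain ⟨t, ht⟩ := hdvd
      rw [ht, pow_mul, hpow, one_pow])] at h1
    rw [Finset.prod_pair (by omega : (0:ℕ) ≠ n)] at h1
    rw [Nat.choose_zero_right, Nat.choose_self, pow_one, pow_one] at h1
    have : (dmap w ^ 0) x = x := rfl
    rw [this] at h1
    exact (left_eq_mul.mp h1.symm)
  have hexm : ∃ m, (dmap w ^ m) b = 1 := ⟨p ^ r, hEnil b⟩
  set m := Nat.find hexm with hmdef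
  have hm : (dmap w ^ m) b = 1 := Nat.find_spec hexm
  have hlt : ∀ k, k < m → (dmap w ^ k) b ≠ 1 := fun k hk => Nat.find_min hexm hk
  have hlow : p ^ m ≤ Nat.card M := card_ge_pow w hp hpow hlt hm
  -- f at prime powers
  have hfpow : ∀ a : ℕ, f (p ^ a) = (dmap w ^ (p ^ a - 1)) b := by
    intro a
    rw [f_expand hf0 hfs]
    have hn0 : 0 < p ^ a := pow_pos hp.pos a
    have hsub : ({p ^ a - 1} : Finset ℕ) ⊆ range (p ^ a) := by
      intro j hj
      simp only [Finset.mem_singleton] at hj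
      simp [hj, Finset.mem_range]
      omega
    rw [← Finset.prod_subset hsub (by
      intro j hj hnj
      simp only [Finset.mem_singleton] at hnj
      simp only [Finset.mem_range] at hj
      have hdvd : p ∣ (p ^ a).choose (j+1) := hp.dvd_choose_pow (by omega) (by omega)
      obtain ⟨t, ht⟩ := hdvd
      rw [ht, pow_mul, hpow, one_pow])]
    rw [Finset.prod_singleton]
    have : p ^ a - 1 + 1 = p ^ a := by omega
    rw [this, Nat.choose_self, pow_one]
  have hupper : ∀ a : ℕ, m + 1 ≤ p ^ a → Nat.card M ≤ p ^ a := by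
    intro a ha
    have h1 : f (p ^ a) = 1 := by
      rw [hfpow a]
      exact dmap_pow_one_of_le hm (by omega)
    exact card_le_of_root hf0 hfs hsurj (pow_pos hp.pos a) h1
  -- bound m
  set aa : ℕ := if 2 < p then 1 else 2 with haa
  have hm_le : m ≤ aa := by
    by_contra hcon
    push_neg at hcon
    have hex_a : ∃ a, m + 1 ≤ p ^ a := ⟨m + 1, by
      calc m + 1 ≤ 2 ^ (m+1) := by
            have := Nat.lt_two_pow_self (n := m+1)
            omega
        _ ≤ p ^ (m+1) := Nat.pow_le_pow_left hp.two_le _⟩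
    set a0 := Nat.find hex_a with ha0def
    have ha0 : m + 1 ≤ p ^ a0 := Nat.find_spec hex_a
    have hcard_le := hupper a0 ha0
    have hma0 : m ≤ a0 := by
      have : p ^ m ≤ p ^ a0 := le_trans hlow hcard_le
      exact (Nat.pow_le_pow_iff_right hp.one_lt).mp this
    have ha0pos : 1 ≤ a0 := by
      rcases Nat.eq_zero_or_pos a0 with h | h
      · exfalso
        rw [h] at ha0
        simp at ha0
        -- m + 1 ≤ 1
        rcases Nat.lt_or_ge 2 p with h2 | h2 <;> simp [haa] at hcon <;> omega
      · exact h
    have hmin : ¬ (m + 1 ≤ p ^ (a0 - 1)) := Nat.find_min hex_a (by omega)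
    push_neg at hmin
    -- p ^ (a0 - 1) ≤ m ≤ a0
    rcases Nat.lt_or_ge 2 p with h2 | h2
    · -- p ≥ 3, aa = 1, m ≥ 2
      have haa1 : aa = 1 := by simp [haa, h2]
      have hm2 : 2 ≤ m := by omega
      have ha02 : 2 ≤ a0 := by omega
      have := arith_three (p := p) (by omega) ha02
      omega
    · -- p = 2, aa = 2, m ≥ 3
      have hp2 : p = 2 := by
        have := hp.two_le
        omega
      have haa2 : aa = 2 := by simp [haa, h2]
      have hm3 : 3 ≤ m := by omega
      have ha03 : 3 ≤ a0 := by
        by_contra hc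
        push_neg at hc
        interval_cases a0 <;> simp [hp2] at ha0 hmin <;> omega
      have := arith_two ha03
      rw [hp2] at hmin
      omega
  constructor
  · apply hupper
    rcases Nat.lt_or_ge 2 p with h2 | h2
    · simp only [haa, if_pos h2] at hm_le ⊢
      have := hp.two_le
      calc m + 1 ≤ 2 := by omega
        _ ≤ p ^ 1 := by simpa using hp.two_le
    · simp only [haa, if_neg (by omega : ¬ 2 < p)] at hm_le ⊢
      calc m + 1 ≤ 3 := by omega
        _ ≤ p ^ 2 := by nlinarith [hp.two_le]
  · intro x
    obtain ⟨i, rfl⟩ := hsurj x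
    rw [f_expand hf0 hfs, map_prod]
    apply Finset.prod_eq_one
    intro j hj
    rw [map_pow, ← end_pow_add]
    have : (dmap w ^ (aa + j)) b = 1 := dmap_pow_one_of_le hm (by omega)
    rw [this, one_pow]

/-- Key lemma for the quotient of exponent `4`. -/
lemma lemC (hf0 : f 0 = 1) (hfs : ∀ i, f (i + 1) = f i * (w ^ i) b)
    [Finite M] (hsurj : ∀ m : M, ∃ i, f i = m)
    (hpow : ∀ x : M, x ^ 4 = 1)
    (hDD : ∀ x : M, ∃ y : M, (dmap w ^ 2) x = y ^ 2) :
    Nat.card M ≤ 8 := by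
  have hE4 : ∀ x : M, (dmap w ^ 4) x = 1 := by
    intro x
    obtain ⟨y, hy⟩ := hDD x
    obtain ⟨z, hz⟩ := hDD y
    have h1 : (dmap w ^ 4) x = (dmap w ^ 2) ((dmap w ^ 2) x) := by
      rw [← end_pow_add]
    rw [h1, hy, map_pow, hz, ← pow_mul]
    exact hpow z
  have hroot : f 8 = 1 := by
    rw [f_expand hf0 hfs]
    have h1 : ∀ j ∈ range 8, 4 ≤ j → ((dmap w ^ j) b) ^ ((8:ℕ).choose (j+1)) = 1 := by
      intro j hj h4
      have h5 : j = j - 4 + 4 := by omega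
      rw [h5, end_pow_add, hE4, map_one, one_pow]
    rw [Finset.prod_range_succ, Finset.prod_range_succ, Finset.prod_range_succ,
      Finset.prod_range_succ, Finset.prod_range_succ, Finset.prod_range_succ,
      Finset.prod_range_succ, Finset.prod_range_succ, Finset.range_zero, Finset.prod_empty]
    rw [h1 4 (by simp) (by omega), h1 5 (by simp) (by omega), h1 6 (by simp) (by omega),
      h1 7 (by simp) (by omega)]
    have hc1 : (8:ℕ).choose 1 = 8 := by decide
    have hc2 : (8:ℕ).choose 2 = 28 := by decide
    have hc3 : (8:ℕ).choose 3 = 56 := by decide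
    have hc4 : (8:ℕ).choose 4 = 70 := by decide
    rw [hc1, hc2, hc3, hc4]
    have e0 : (dmap w ^ 0) b = b := rfl
    rw [e0]
    have t1 : b ^ 8 = 1 := by
      rw [show (8:ℕ) = 4 * 2 from rfl, pow_mul, hpow, one_pow]
    have t2 : ((dmap w ^ 1) b) ^ 28 = 1 := by
      rw [show (28:ℕ) = 4 * 7 from rfl, pow_mul, hpow, one_pow]
    have t3 : ((dmap w ^ 2) b) ^ 56 = 1 := by
      rw [show (56:ℕ) = 4 * 14 from rfl, pow_mul, hpow, one_pow]
    have t4 : ((dmap w ^ 3) b) ^ 70 = 1 := by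
      obtain ⟨y, hy⟩ := hDD (dmap w b)
      have : (dmap w ^ 3) b = (dmap w ^ 2) (dmap w b) := by
        rw [show (3:ℕ) = 2 + 1 from rfl, end_pow_add]
        rfl
      rw [this, hy, ← pow_mul, show (2 * 70 : ℕ) = 4 * 35 from rfl, pow_mul, hpow, one_pow]
    rw [t1, t2, t3, t4]
    simp
  exact card_le_of_root hf0 hfs hsurj (by norm_num) hroot

end MainPrime


section Quotient

variable (c : ℕ)

/-- The subgroup of `c`-th powers. -/
def pw : Subgroup M := (powMonoidHom c : M →* M).range

lemma mem_pw {c : ℕ} {x : M} : x ∈ pw (M := M) c ↔ ∃ y : M, y ^ c = x := by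
  constructor
  · rintro ⟨y, rfl⟩
    exact ⟨y, rfl⟩
  · rintro ⟨y, rfl⟩
    exact ⟨y, rfl⟩

variable (w : M ≃* M)

lemma pw_map : (pw (M := M) c).map w = pw (M := M) c := by
  apply le_antisymm
  · rintro x hx
    obtain ⟨y, hy, rfl⟩ := Subgroup.mem_map.mp hx
    obtain ⟨z, rfl⟩ := mem_pw.mp hy
    exact mem_pw.mpr ⟨w z, (map_pow w z c).symm⟩
  · rintro x hx
    obtain ⟨z, rfl⟩ := mem_pw.mp hx
    refine Subgroup.mem_map.mpr ⟨(w.symm z) ^ c, mem_pw.mpr ⟨w.symm z, rfl⟩, ?_⟩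
    rw [map_pow]
    congr 1
    exact w.apply_symm_apply z

/-- The automorphism induced on `M ⧸ pw c`. -/
def wbar : (M ⧸ pw (M := M) c) ≃* (M ⧸ pw (M := M) c) :=
  QuotientGroup.congr _ _ w (pw_map c w)

lemma wbar_mk (x : M) : wbar c w (x : M ⧸ pw (M := M) c) = (w x : M ⧸ pw (M := M) c) :=
  QuotientGroup.congr_mk _ _ _ _ x

lemma wbar_pow_mk (i : ℕ) (x : M) :
    ((wbar c w) ^ i) (x : M ⧸ pw (M := M) c) = (((w ^ i) x : M) : M ⧸ pw (M := M) c) := by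
  induction i with
  | zero => rfl
  | succ i ih => rw [aut_pow_succ, ih, wbar_mk, aut_pow_succ]

lemma dmap_wbar_mk (x : M) :
    dmap (wbar c w) (x : M ⧸ pw (M := M) c) = ((dmap w x : M) : M ⧸ pw (M := M) c) := by
  rw [dmap_apply, dmap_apply, wbar_mk]
  rfl

lemma dmap_wbar_pow_mk (j : ℕ) (x : M) :
    (dmap (wbar c w) ^ j) (x : M ⧸ pw (M := M) c) = (((dmap w ^ j) x : M) : M ⧸ pw (M := M) c) := by
  induction j with
  | zero => rfl
  | succ j ih => rw [end_pow_succ', end_pow_succ', ih, dmap_wbar_mk]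

lemma pw_pow_eq_one (q : M ⧸ pw (M := M) c) : q ^ c = 1 := by
  induction q using QuotientGroup.induction_on with
  | _ x =>
    rw [← QuotientGroup.mk_pow]
    rw [QuotientGroup.eq_one_iff]
    exact mem_pw.mpr ⟨x, rfl⟩

variable {b : M} {f : ℕ → M}

lemma quot_cocycle (hf0 : f 0 = 1) (hfs : ∀ i, f (i + 1) = f i * (w ^ i) b)
    (hsurj : ∀ m : M, ∃ i, f i = m) :
    ((fun i => ((f i : M) : M ⧸ pw (M := M) c)) 0 = 1)
    ∧ (∀ i, ((f (i+1) : M) : M ⧸ pw (M := M) c)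
        = ((f i : M) : M ⧸ pw (M := M) c) * ((wbar c w) ^ i) ((b : M) : M ⧸ pw (M := M) c))
    ∧ (∀ m : M ⧸ pw (M := M) c, ∃ i, ((f i : M) : M ⧸ pw (M := M) c) = m) := by
  refine ⟨by simp only []; rw [hf0]; rfl, fun i => ?_, fun m => ?_⟩
  · rw [hfs, wbar_pow_mk]
    rfl
  · induction m using QuotientGroup.induction_on with
    | _ x =>
      obtain ⟨i, rfl⟩ := hsurj x
      exact ⟨i, rfl⟩

end Quotient


section Assembly

variable {ι : Type} [Fintype ι] {n : ι → ℕ}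

/-- Reduction of the `i`-th coordinate. -/
def coordHom (φ : Additive M ≃+ ((i : ι) → ZMod (n i))) (i : ι) (d : ℕ) (hd : d ∣ n i) :
    M →* Multiplicative (ZMod d) :=
  MonoidHom.mk' (fun x => Multiplicative.ofAdd ((ZMod.castHom hd (ZMod d)) (φ (Additive.ofMul x) i)))
    (by
      intro a b
      simp only [← ofAdd_add]
      congr 1
      have h : Additive.ofMul (a * b) = Additive.ofMul a + Additive.ofMul b := rfl
      rw [h, map_add, Pi.add_apply]
      exact map_add _ _ _)

lemma coordHom_apply (φ : Additive M ≃+ ((i : ι) → ZMod (n i))) (i : ι) (d : ℕ) (hd : d ∣ n i)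
    (x : M) :
    coordHom φ i d hd x
      = Multiplicative.ofAdd ((ZMod.castHom hd (ZMod d)) (φ (Additive.ofMul x) i)) := rfl

lemma coordHom_pow_c (φ : Additive M ≃+ ((i : ι) → ZMod (n i))) (i : ι) (d : ℕ) (hd : d ∣ n i)
    {c : ℕ} (hdc : d ∣ c) (x : M) : (coordHom φ i d hd x) ^ c = 1 := by
  obtain ⟨k, rfl⟩ := hdc
  rw [coordHom_apply, ← ofAdd_nsmul]
  have hz : ∀ z : ZMod d, d • z = 0 := by
    intro z
    rw [nsmul_eq_mul, ZMod.natCast_self, zero_mul]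
  have : (d * k) • ((ZMod.castHom hd (ZMod d)) (φ (Additive.ofMul x) i)) = 0 := by
    calc (d * k) • ((ZMod.castHom hd (ZMod d)) (φ (Additive.ofMul x) i))
        = k • (d • ((ZMod.castHom hd (ZMod d)) (φ (Additive.ofMul x) i))) := by
          rw [mul_comm d k, mul_nsmul]
          rw [nsmul_left_comm]
      _ = 0 := by rw [hz, smul_zero]
  rw [this]
  rfl

lemma elim_card [Finite M] {c : ℕ} {T : Type} [CommGroup T] [Finite T]
    (χ : M →* T) (hs : Function.Surjective ⇑χ) (hker : ∀ x : M, χ x ^ c = 1) :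
    Nat.card T ≤ Nat.card (M ⧸ pw (M := M) c) := by
  have hle : ∀ x ∈ pw (M := M) c, χ x = 1 := by
    intro x hx
    obtain ⟨y, rfl⟩ := mem_pw.mp hx
    rw [map_pow]
    exact hker y
  apply Nat.card_le_card_of_surjective (QuotientGroup.lift (pw (M := M) c) χ (fun x hx => MonoidHom.mem_ker.mpr (hle x hx)))
  intro t
  obtain ⟨x, rfl⟩ := hs t
  exact ⟨(x : M ⧸ pw (M := M) c), by simp⟩

lemma card_mult_zmod (d : ℕ) : Nat.card (Multiplicative (ZMod d)) = d := by
  exact (Nat.card_congr Multiplicative.ofAdd.symm).trans (Nat.card_zmod d)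

lemma pair_bound [Finite M] (φ : Additive M ≃+ ((i : ι) → ZMod (n i))) {i₁ i₂ : ι}
    (hne : i₁ ≠ i₂) {c d₁ d₂ : ℕ} [NeZero d₁] [NeZero d₂]
    (h₁ : d₁ ∣ n i₁) (h₂ : d₂ ∣ n i₂) (hd₁ : d₁ ∣ c) (hd₂ : d₂ ∣ c) :
    d₁ * d₂ ≤ Nat.card (M ⧸ pw (M := M) c) := by
  classical
  set χ := (coordHom φ i₁ d₁ h₁).prod (coordHom φ i₂ d₂ h₂) with hχ
  have hs : Function.Surjective ⇑χ := by
    rintro ⟨t₁, t₂⟩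
    obtain ⟨a₁, ha₁⟩ := ZMod.natCast_zmod_surjective (Multiplicative.toAdd t₁)
    obtain ⟨a₂, ha₂⟩ := ZMod.natCast_zmod_surjective (Multiplicative.toAdd t₂)
    set u : (i : ι) → ZMod (n i) :=
      Function.update (Function.update (0 : (i : ι) → ZMod (n i)) i₁ ((a₁ : ZMod (n i₁)))) i₂
        ((a₂ : ZMod (n i₂))) with hu
    refine ⟨Additive.toMul (φ.symm u), ?_⟩
    have hφu : φ (Additive.ofMul (Additive.toMul (φ.symm u))) = u := by
      simp
    have hu₁ : u i₁ = ((a₁ : ℕ) : ZMod (n i₁)) := by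
      rw [hu, Function.update_of_ne hne, Function.update_self]
    have hu₂ : u i₂ = ((a₂ : ℕ) : ZMod (n i₂)) := by
      rw [hu, Function.update_self]
    have hc₁ : χ (Additive.toMul (φ.symm u)) =
        (Multiplicative.ofAdd ((ZMod.castHom h₁ (ZMod d₁)) (u i₁)),
         Multiplicative.ofAdd ((ZMod.castHom h₂ (ZMod d₂)) (u i₂))) := by
      rw [hχ]
      simp only [MonoidHom.prod_apply, coordHom_apply, hφu]
    rw [hc₁, hu₁, hu₂, map_natCast (ZMod.castHom h₁ (ZMod d₁)) a₁,
      map_natCast (ZMod.castHom h₂ (ZMod d₂)) a₂, ha₁, ha₂]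
    rfl
  have hker : ∀ x : M, χ x ^ c = 1 := by
    intro x
    have hx : χ x ^ c = ((coordHom φ i₁ d₁ h₁ x) ^ c, (coordHom φ i₂ d₂ h₂ x) ^ c) := rfl
    rw [hx, coordHom_pow_c _ _ _ _ hd₁, coordHom_pow_c _ _ _ _ hd₂]
    rfl
  calc d₁ * d₂ = Nat.card (Multiplicative (ZMod d₁) × Multiplicative (ZMod d₂)) := by
        rw [Nat.card_prod, card_mult_zmod, card_mult_zmod]
    _ ≤ _ := elim_card χ hs hker


lemma triple_bound [Finite M] (φ : Additive M ≃+ ((i : ι) → ZMod (n i))) {i₁ i₂ i₃ : ι}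
    (h12 : i₁ ≠ i₂) (h13 : i₁ ≠ i₃) (h23 : i₂ ≠ i₃) {c d₁ d₂ d₃ : ℕ}
    [NeZero d₁] [NeZero d₂] [NeZero d₃]
    (h₁ : d₁ ∣ n i₁) (h₂ : d₂ ∣ n i₂) (h₃ : d₃ ∣ n i₃)
    (hd₁ : d₁ ∣ c) (hd₂ : d₂ ∣ c) (hd₃ : d₃ ∣ c) :
    d₁ * d₂ * d₃ ≤ Nat.card (M ⧸ pw (M := M) c) := by
  classical
  set χ := ((coordHom φ i₁ d₁ h₁).prod (coordHom φ i₂ d₂ h₂)).prod (coordHom φ i₃ d₃ h₃) with hχ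
  have hs : Function.Surjective ⇑χ := by
    rintro ⟨⟨t₁, t₂⟩, t₃⟩
    obtain ⟨a₁, ha₁⟩ := ZMod.natCast_zmod_surjective (Multiplicative.toAdd t₁)
    obtain ⟨a₂, ha₂⟩ := ZMod.natCast_zmod_surjective (Multiplicative.toAdd t₂)
    obtain ⟨a₃, ha₃⟩ := ZMod.natCast_zmod_surjective (Multiplicative.toAdd t₃)
    set u : (i : ι) → ZMod (n i) :=
      Function.update (Function.update
        (Function.update (0 : (i : ι) → ZMod (n i)) i₁ ((a₁ : ZMod (n i₁)))) i₂
        ((a₂ : ZMod (n i₂)))) i₃ ((a₃ : ZMod (n i₃))) with hu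
    refine ⟨Additive.toMul (φ.symm u), ?_⟩
    have hφu : φ (Additive.ofMul (Additive.toMul (φ.symm u))) = u := by simp
    have hu₁ : u i₁ = ((a₁ : ℕ) : ZMod (n i₁)) := by
      rw [hu, Function.update_of_ne h13, Function.update_of_ne h12, Function.update_self]
    have hu₂ : u i₂ = ((a₂ : ℕ) : ZMod (n i₂)) := by
      rw [hu, Function.update_of_ne h23, Function.update_self]
    have hu₃ : u i₃ = ((a₃ : ℕ) : ZMod (n i₃)) := by
      rw [hu, Function.update_self]
    have hc₁ : χ (Additive.toMul (φ.symm u)) =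
        ((Multiplicative.ofAdd ((ZMod.castHom h₁ (ZMod d₁)) (u i₁)),
          Multiplicative.ofAdd ((ZMod.castHom h₂ (ZMod d₂)) (u i₂))),
         Multiplicative.ofAdd ((ZMod.castHom h₃ (ZMod d₃)) (u i₃))) := by
      rw [hχ]
      simp only [MonoidHom.prod_apply, coordHom_apply, hφu]
    rw [hc₁, hu₁, hu₂, hu₃, map_natCast (ZMod.castHom h₁ (ZMod d₁)) a₁,
      map_natCast (ZMod.castHom h₂ (ZMod d₂)) a₂, map_natCast (ZMod.castHom h₃ (ZMod d₃)) a₃,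
      ha₁, ha₂, ha₃]
    rfl
  have hker : ∀ x : M, χ x ^ c = 1 := by
    intro x
    have hx : χ x ^ c = (((coordHom φ i₁ d₁ h₁ x) ^ c, (coordHom φ i₂ d₂ h₂ x) ^ c),
        (coordHom φ i₃ d₃ h₃ x) ^ c) := rfl
    rw [hx, coordHom_pow_c _ _ _ _ hd₁, coordHom_pow_c _ _ _ _ hd₂, coordHom_pow_c _ _ _ _ hd₃]
    rfl
  calc d₁ * d₂ * d₃
      = Nat.card ((Multiplicative (ZMod d₁) × Multiplicative (ZMod d₂)) ×
          Multiplicative (ZMod d₃)) := by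
        rw [Nat.card_prod, Nat.card_prod, card_mult_zmod, card_mult_zmod, card_mult_zmod]
    _ ≤ _ := elim_card χ hs hker

lemma prod_dvd_pairwise {κ : Type*} [DecidableEq κ] (s : Finset κ) (g : κ → ℕ) (L : ℕ)
    (hco : ∀ i ∈ s, ∀ j ∈ s, i ≠ j → Nat.Coprime (g i) (g j)) (hdvd : ∀ i ∈ s, g i ∣ L) :
    (∏ i ∈ s, g i) ∣ L := by
  induction s using Finset.induction_on with
  | empty => simpa using one_dvd L
  | @insert a s hnotmem ih =>
    rw [Finset.prod_insert hnotmem]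
    apply Nat.Coprime.mul_dvd_of_dvd_of_dvd
    · apply Nat.Coprime.prod_right
      intro i hi
      exact hco a (Finset.mem_insert_self a s) i (Finset.mem_insert_of_mem hi)
        (by rintro rfl; exact hnotmem hi)
    · exact hdvd a (Finset.mem_insert_self a s)
    · exact ih (fun i hi j hj hij => hco i (Finset.mem_insert_of_mem hi) j
        (Finset.mem_insert_of_mem hj) hij) (fun i hi => hdvd i (Finset.mem_insert_of_mem hi))

end Assembly


section Core

lemma index_le_two_of_card {g : M} [Finite M] (h : Nat.card M ≤ 2 * orderOf g) :
    (Subgroup.zpowers g).index ≤ 2 := by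
  have h1 := Subgroup.card_mul_index (Subgroup.zpowers g)
  rw [Nat.card_zpowers] at h1
  have hpos : 0 < orderOf g := orderOf_pos g
  nlinarith [h1, hpos]

/-- The core lemma: a finite abelian group with a surjective twisted-cocycle defined by an
automorphism has a cyclic subgroup of index at most 2. -/
theorem core [Finite M] (w : M ≃* M) (b : M) (f : ℕ → M)
    (hf0 : f 0 = 1) (hfs : ∀ i, f (i + 1) = f i * (w ^ i) b) (hsurj : ∀ m : M, ∃ i, f i = m) :
    ∃ x : M, (Subgroup.zpowers x).index ≤ 2 := by
  classical
  have hBodd : ∀ p : ℕ, p.Prime → 2 < p → Nat.card (M ⧸ pw (M := M) p) ≤ p := by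
    intro p hp h2
    obtain ⟨h0, hsQ, hsj⟩ := quot_cocycle p w hf0 hfs hsurj
    have hres := (lemB h0 hsQ hsj hp (pw_pow_eq_one p)).1
    rw [if_pos h2, pow_one] at hres
    exact hres
  have hB2 := by
    obtain ⟨h0, hsQ, hsj⟩ := quot_cocycle 2 w hf0 hfs hsurj
    exact lemB h0 hsQ hsj Nat.prime_two (pw_pow_eq_one 2)
  have hB2card : Nat.card (M ⧸ pw (M := M) 2) ≤ 4 := by
    have := hB2.1
    norm_num at this
    exact this
  have hDD : ∀ x : M, ∃ y : M, (dmap w ^ 2) x = y ^ 2 := by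
    intro x
    have h1 := hB2.2 ((x : M ⧸ pw (M := M) 2))
    rw [if_neg (by omega : ¬ (2:ℕ) < 2)] at h1
    rw [dmap_wbar_pow_mk] at h1
    rw [QuotientGroup.eq_one_iff] at h1
    obtain ⟨y, hy⟩ := mem_pw.mp h1
    exact ⟨y, hy.symm⟩
  have hB4 : Nat.card (M ⧸ pw (M := M) 4) ≤ 8 := by
    obtain ⟨h0, hsQ, hsj⟩ := quot_cocycle 4 w hf0 hfs hsurj
    apply lemC h0 hsQ hsj (pw_pow_eq_one 4)
    intro q
    induction q using QuotientGroup.induction_on with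
    | _ x =>
      obtain ⟨y, hy⟩ := hDD x
      refine ⟨((y : M) : M ⧸ pw (M := M) 4), ?_⟩
      rw [dmap_wbar_pow_mk, hy]
      rfl
  -- structure theorem
  obtain ⟨ι, hι, pp, hpp, ee, ⟨φ₀⟩⟩ := AddCommGroup.equiv_directSum_zmod_of_finite (Additive M)
  set nn : ι → ℕ := fun i => pp i ^ ee i with hnn
  let φ : Additive M ≃+ ((i : ι) → ZMod (nn i)) := φ₀.trans (DirectSum.addEquivProd _)
  have hcard : Nat.card M = ∏ i, nn i := by
    calc Nat.card M = Nat.card ((i : ι) → ZMod (nn i)) :=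
          Nat.card_congr ((Additive.ofMul).trans φ.toEquiv)
      _ = ∏ i, nn i := by
          rw [Nat.card_pi]
          exact Finset.prod_congr rfl (fun i _ => Nat.card_zmod _)
  set L := Monoid.exponent M with hLdef
  have hLpos : 0 < L := Monoid.exponent_pos.mpr Monoid.ExponentExists.of_finite
  have horder : ∀ i : ι, nn i ∣ L := by
    intro i
    set gi : (j : ι) → ZMod (nn j) := Pi.single i (1 : ZMod (nn i)) with hgi
    have h1 : addOrderOf gi = nn i := by
      have hinj : Function.Injective (AddMonoidHom.single (fun j => ZMod (nn j)) i) := by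
        intro x y hxy
        exact Pi.single_injective (M := fun j => ZMod (nn j)) i hxy
      have h := addOrderOf_injective (AddMonoidHom.single (fun j => ZMod (nn j)) i) hinj
        (1 : ZMod (nn i))
      rw [ZMod.addOrderOf_one] at h
      exact h
    have h2 : orderOf (Additive.toMul (φ.symm gi)) = nn i := by
      have ha : addOrderOf (φ.symm gi) = addOrderOf gi :=
        addOrderOf_injective φ.symm.toAddMonoidHom φ.symm.injective gi
      have hb := addOrderOf_ofMul_eq_orderOf (Additive.toMul (φ.symm gi))
      have hc : Additive.ofMul (Additive.toMul (φ.symm gi)) = φ.symm gi := rfl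
      rw [hc] at hb
      rw [← hb, ha, h1]
    rw [← h2]
    exact Monoid.order_dvd_exponent _
  -- eliminations
  have hE1 : ∀ i j, i ≠ j → 0 < ee i → 0 < ee j → pp i = pp j → pp i = 2 := by
    intro i j hij hei hej hpeq
    by_contra hne2
    have hp := hpp i
    have hodd : 2 < pp i := by
      have := hp.two_le
      omega
    haveI : NeZero (pp i) := ⟨hp.pos.ne'⟩
    have hdvd1 : pp i ∣ nn i := dvd_pow_self _ (by omega)
    have hdvd2 : pp i ∣ nn j := by
      rw [hnn]
      simp only []
      rw [← hpeq]
      exact dvd_pow_self _ (by omega)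
    have hb := pair_bound (c := pp i) φ hij hdvd1 hdvd2 (dvd_refl _) (dvd_refl _)
    have hub := hBodd (pp i) hp hodd
    nlinarith [hp.two_le]
  have hE3 : ∀ i j, i ≠ j → pp i = 2 → pp j = 2 → 2 ≤ ee i → 2 ≤ ee j → False := by
    intro i j hij h2i h2j hei hej
    haveI : NeZero (4:ℕ) := ⟨by norm_num⟩
    have hdvd1 : (4:ℕ) ∣ nn i := by
      rw [hnn]
      simp only []
      rw [h2i, show (4:ℕ) = 2 ^ 2 from rfl]
      exact pow_dvd_pow 2 hei
    have hdvd2 : (4:ℕ) ∣ nn j := by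
      rw [hnn]
      simp only []
      rw [h2j, show (4:ℕ) = 2 ^ 2 from rfl]
      exact pow_dvd_pow 2 hej
    have hb := pair_bound (c := 4) φ hij hdvd1 hdvd2 (dvd_refl _) (dvd_refl _)
    omega
  have hE2 : ∀ i j k, i ≠ j → i ≠ k → j ≠ k → 0 < ee i → 0 < ee j → 0 < ee k →
      pp i = 2 → pp j = 2 → pp k = 2 → False := by
    intro i j k hij hik hjk hei hej hek h2i h2j h2k
    haveI : NeZero (2:ℕ) := ⟨by norm_num⟩
    have hdvd : ∀ l, pp l = 2 → 0 < ee l → (2:ℕ) ∣ nn l := by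
      intro l h2l hel
      rw [hnn]
      simp only []
      rw [h2l]
      exact dvd_pow_self _ (by omega)
    have hb := triple_bound (c := 2) φ hij hik hjk (hdvd i h2i hei) (hdvd j h2j hej)
      (hdvd k h2k hek) (dvd_refl _) (dvd_refl _) (dvd_refl _)
    omega
  -- selection of coprime part
  set s : Finset ι := Finset.univ.filter (fun i => 0 < ee i) with hsdef
  have hmem_s : ∀ i, i ∈ s ↔ 0 < ee i := by
    intro i
    simp [hsdef]
  have hprod_s : ∏ i ∈ s, nn i = ∏ i, nn i := by
    apply Finset.prod_subset (Finset.subset_univ s)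
    intro x _ hxs
    rw [hmem_s] at hxs
    have : ee x = 0 := by omega
    rw [hnn]
    simp only []
    rw [this, pow_zero]
  obtain ⟨g, hg⟩ := Monoid.exists_orderOf_eq_exponent (G := M) Monoid.ExponentExists.of_finite
  by_cases hbad : ∃ i j, i ∈ s ∧ j ∈ s ∧ i ≠ j ∧ pp i = pp j
  · obtain ⟨i0, j0, hi0, hj0, hij0, hp0⟩ := hbad
    have h2i0 : pp i0 = 2 := hE1 i0 j0 hij0 ((hmem_s i0).mp hi0) ((hmem_s j0).mp hj0) hp0
    have h2j0 : pp j0 = 2 := by rw [← hp0]; exact h2i0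
    have hone : ee i0 = 1 ∨ ee j0 = 1 := by
      by_contra hc
      push_neg at hc
      have hei : 2 ≤ ee i0 := by
        have := (hmem_s i0).mp hi0
        omega
      have hej : 2 ≤ ee j0 := by
        have := (hmem_s j0).mp hj0
        omega
      exact hE3 i0 j0 hij0 h2i0 h2j0 hei hej
    obtain ⟨a0, b0, hab, ha0, hb0, hpa, hpb, heb⟩ :
        ∃ a b, a ≠ b ∧ a ∈ s ∧ b ∈ s ∧ pp a = 2 ∧ pp b = 2 ∧ ee b = 1 := by
      rcases hone with h | h
      · exact ⟨j0, i0, hij0.symm, hj0, hi0, h2j0, h2i0, h⟩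
      · exact ⟨i0, j0, hij0, hi0, hj0, h2i0, h2j0, h⟩
    set s' : Finset ι := s.erase b0 with hs'def
    have hco : ∀ i ∈ s', ∀ j ∈ s', i ≠ j → Nat.Coprime (nn i) (nn j) := by
      intro i hi j hj hij
      rcases eq_or_ne (pp i) (pp j) with hpe | hpe
      · exfalso
        have hi_s := Finset.mem_of_mem_erase hi
        have hj_s := Finset.mem_of_mem_erase hj
        have h2 : pp i = 2 := hE1 i j hij ((hmem_s i).mp hi_s) ((hmem_s j).mp hj_s) hpe
        exact hE2 i j b0 hij (Finset.ne_of_mem_erase hi) (Finset.ne_of_mem_erase hj)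
          ((hmem_s i).mp hi_s) ((hmem_s j).mp hj_s) ((hmem_s b0).mp hb0)
          h2 (by rw [← hpe]; exact h2) hpb
      · rw [hnn]
        exact Nat.Coprime.pow (ee i) (ee j) ((Nat.coprime_primes (hpp i) (hpp j)).mpr hpe)
    have hdvdL : (∏ i ∈ s', nn i) ∣ L :=
      prod_dvd_pairwise s' nn L hco (fun i _ => horder i)
    have hPle : (∏ i ∈ s', nn i) ≤ L := Nat.le_of_dvd hLpos hdvdL
    have hsplit : ∏ i ∈ s, nn i = nn b0 * ∏ i ∈ s', nn i := by
      rw [hs'def]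
      exact (Finset.mul_prod_erase s nn hb0).symm
    have hnb0 : nn b0 = 2 := by
      rw [hnn]
      simp only []
      rw [hpb, heb, pow_one]
    apply Exists.intro g
    apply index_le_two_of_card
    rw [hg, ← hLdef, hcard, ← hprod_s, hsplit, hnb0]
    omega
  · push_neg at hbad
    have hco : ∀ i ∈ s, ∀ j ∈ s, i ≠ j → Nat.Coprime (nn i) (nn j) := by
      intro i hi j hj hij
      have hpe : pp i ≠ pp j := hbad i j hi hj hij
      rw [hnn]
      exact Nat.Coprime.pow (ee i) (ee j) ((Nat.coprime_primes (hpp i) (hpp j)).mpr hpe)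
    have hdvdL : (∏ i ∈ s, nn i) ∣ L :=
      prod_dvd_pairwise s nn L hco (fun i _ => horder i)
    have hPle : (∏ i ∈ s, nn i) ≤ L := Nat.le_of_dvd hLpos hdvdL
    apply Exists.intro g
    apply index_le_two_of_card
    rw [hg, ← hLdef, hcard, ← hprod_s]
    omega

end Core


lemma isCyclic_zpowers {K : Type*} [Group K] (a : K) : IsCyclic ↥(Subgroup.zpowers a) := by
  refine ⟨⟨⟨a, Subgroup.mem_zpowers a⟩, fun x => ?_⟩⟩
  obtain ⟨k, hk⟩ := Subgroup.mem_zpowers_iff.mp x.2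
  refine Subgroup.mem_zpowers_iff.mpr ⟨k, Subtype.ext ?_⟩
  rw [SubgroupClass.coe_zpow]
  exact hk

end Stmt6Aux

open Stmt6Aux

/-- Lemma 3.7: abelian-by-cyclic groups admitting an order-2 automorphism `σ`
and a subgroup `H` with `H ∩ A = 1` and `σ(H)·H = G` have `A` nearly cyclic. -/
theorem stmt_6 {G : Type*} [Group G] [Finite G]
    (A H : Subgroup G) [nA : A.Normal]
    (habel : ∀ a ∈ A, ∀ b ∈ A, a * b = b * a)
    (hcyc : IsCyclic (G ⧸ A))
    (σ : G ≃* G) (hσ2 : ∀ g : G, σ (σ g) = g)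
    (hσA : A.map σ.toMonoidHom = A)
    (hHA : H ⊓ A = ⊥)
    (hfact : ∀ g : G, ∃ a ∈ H.map σ.toMonoidHom, ∃ b ∈ H, g = a * b) :
    ∃ C : Subgroup G, C ≤ A ∧ IsCyclic C ∧ C.relIndex A ≤ 2 := by
  classical
  set π : G →* G ⧸ A := QuotientGroup.mk' A with hπdef
  letI : CommGroup (G ⧸ A) := IsCyclic.commGroup
  set X : Subgroup (G ⧸ A) := H.map π with hXdef
  set Y : Subgroup (G ⧸ A) := (H.map σ.toMonoidHom).map π with hYdef
  have hmemA : ∀ g : G, π g = 1 → g ∈ A := by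
    intro g hg
    rw [← QuotientGroup.ker_mk' A]
    exact hg
  have hker : ∀ h : G, h ∈ H → π h = 1 → h = 1 := by
    intro h hh h1
    have h2 : h ∈ H ⊓ A := ⟨hh, hmemA h h1⟩
    rwa [hHA, Subgroup.mem_bot] at h2
  -- `π` is injective on `H`
  set phiH : ↥H →* G ⧸ A := π.comp H.subtype with hphiH
  have hphiinj : Function.Injective ⇑phiH := by
    intro a b hab
    have hab' : π (a : G) = π (b : G) := hab
    have h1 : π ((a : G) * (b : G)⁻¹) = 1 := by
      rw [map_mul, map_inv, hab', mul_inv_cancel]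
    have h2 : ((a : G) * (b : G)⁻¹) = 1 := hker _ (mul_mem a.2 (inv_mem b.2)) h1
    exact Subtype.ext (mul_inv_eq_one.mp h2)
  have hrangeH : phiH.range = X := by
    rw [hphiH, MonoidHom.range_comp, Subgroup.range_subtype]
  have hcardX : Nat.card X = Nat.card H := by
    rw [← hrangeH]
    exact (Nat.card_congr (MonoidHom.ofInjective hphiinj).toEquiv).symm
  -- similarly for `Y`
  have hkerY : ∀ h : G, h ∈ H.map σ.toMonoidHom → π h = 1 → h = 1 := by
    intro h hh h1
    obtain ⟨x, hx, rfl⟩ := Subgroup.mem_map.mp hh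
    have hA : σ.toMonoidHom x ∈ A := hmemA _ h1
    have hxA : x ∈ A := by
      rw [← hσA] at hA
      obtain ⟨y, hy, hyx⟩ := Subgroup.mem_map.mp hA
      have : y = x := σ.injective hyx
      rwa [← this]
    have h2 : x ∈ H ⊓ A := ⟨hx, hxA⟩
    rw [hHA, Subgroup.mem_bot] at h2
    rw [h2, map_one]
  set phiY : ↥(H.map σ.toMonoidHom) →* G ⧸ A := π.comp (H.map σ.toMonoidHom).subtype with hphiY
  have hphiYinj : Function.Injective ⇑phiY := by
    intro a b hab
    have hab' : π (a : G) = π (b : G) := hab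
    have h1 : π ((a : G) * (b : G)⁻¹) = 1 := by
      rw [map_mul, map_inv, hab', mul_inv_cancel]
    have h2 : ((a : G) * (b : G)⁻¹) = 1 := hkerY _ (mul_mem a.2 (inv_mem b.2)) h1
    exact Subtype.ext (mul_inv_eq_one.mp h2)
  have hrangeY : phiY.range = Y := by
    rw [hphiY, MonoidHom.range_comp, Subgroup.range_subtype]
  have hcardY : Nat.card Y = Nat.card H := by
    rw [← hrangeY]
    have h1 : Nat.card (H.map σ.toMonoidHom) = Nat.card H :=
      (Nat.card_congr (Subgroup.equivMapOfInjective H σ.toMonoidHom σ.injective).toEquiv).symm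
    rw [← h1]
    exact (Nat.card_congr (MonoidHom.ofInjective hphiYinj).toEquiv).symm
  -- the subgroup of d-th roots of unity
  set d := Nat.card H with hd
  have hd0 : 0 < d := Nat.card_pos
  set T : Subgroup (G ⧸ A) := (powMonoidHom d : (G ⧸ A) →* (G ⧸ A)).ker with hT
  haveI : Fintype (G ⧸ A) := Fintype.ofFinite _
  have hTcard : Nat.card T ≤ d := by
    have h1 := IsCyclic.card_pow_eq_one_le (α := G ⧸ A) (n := d) hd0
    have h2 : Nat.card T = Fintype.card {x : G ⧸ A // x ^ d = 1} := by
      rw [Nat.card_eq_fintype_card]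
      apply Fintype.card_congr
      apply Equiv.subtypeEquivRight
      intro x
      rw [hT, MonoidHom.mem_ker]
      rfl
    rw [h2, Fintype.card_subtype]
    exact h1
  have hsubT : ∀ (Z : Subgroup (G ⧸ A)), Nat.card Z = d → Z ≤ T := by
    intro Z hZ x hx
    have h1 : (⟨x, hx⟩ : ↥Z) ^ d = 1 := by
      rw [← hZ]
      exact pow_card_eq_one'
    have h2 : x ^ d = 1 := by
      have := congrArg (Subgroup.subtype Z) h1
      rwa [map_pow] at this
    rw [hT, MonoidHom.mem_ker]
    exact h2
  have heqT : ∀ (Z : Subgroup (G ⧸ A)), Nat.card Z = d → Z = T := by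
    intro Z hZ
    have hle := hsubT Z hZ
    have e := Subgroup.subgroupOfEquivOfLe hle
    have hcardsub : Nat.card (Z.subgroupOf T) = Nat.card Z := Nat.card_congr e.toEquiv
    have htop : Z.subgroupOf T = ⊤ := by
      apply Subgroup.eq_top_of_card_eq
      have hle2 : Nat.card (Z.subgroupOf T) ≤ Nat.card T := Subgroup.card_le_card_group _
      omega
    have hTle : T ≤ Z := Subgroup.subgroupOf_eq_top.mp htop
    exact le_antisymm hle hTle
  have hXY : Y = X := by
    rw [heqT X hcardX, heqT Y hcardY]
  -- `H` is cyclic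
  have hXcyc : IsCyclic ↥X := Subgroup.isCyclic X
  have hHcyc : IsCyclic ↥H := by
    have h1 : IsCyclic ↥phiH.range := by
      rw [hrangeH]
      exact hXcyc
    exact isCyclic_of_surjective (MonoidHom.ofInjective hphiinj).symm
      (MonoidHom.ofInjective hphiinj).symm.surjective
  obtain ⟨x₀, hx₀⟩ := IsCyclic.exists_generator (α := ↥H)
  -- decompose σ x₀
  have hmemY : π (σ (x₀ : G)) ∈ Y := by
    rw [hYdef]
    exact Subgroup.mem_map.mpr ⟨σ (x₀ : G),
      Subgroup.mem_map.mpr ⟨(x₀ : G), x₀.2, rfl⟩, rfl⟩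
  have hmemX : π (σ (x₀ : G)) ∈ X := hXY ▸ hmemY
  obtain ⟨z, hzH, hzeq⟩ := Subgroup.mem_map.mp hmemX
  set b : G := σ (x₀ : G) * z⁻¹ with hbdef
  have hbA : b ∈ A := by
    apply hmemA
    rw [hbdef, map_mul, map_inv, hzeq, mul_inv_cancel]
  -- commutative group structure on A
  letI : CommGroup ↥A :=
    { (inferInstance : Group ↥A) with
      mul_comm := fun a b => Subtype.ext (habel (a : G) a.2 (b : G) b.2) }
  -- conjugation by z as automorphism of A
  set w : ↥A ≃* ↥A :=
    { toFun := fun a => ⟨z * (a : G) * z⁻¹, nA.conj_mem (a : G) a.2 z⟩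
      invFun := fun a => ⟨z⁻¹ * (a : G) * z, by
        have h := nA.conj_mem (a : G) a.2 z⁻¹
        rwa [inv_inv] at h⟩
      left_inv := fun a => by
        ext
        simp [mul_assoc]
      right_inv := fun a => by
        ext
        simp [mul_assoc]
      map_mul' := fun a c => by
        ext
        simp only [Subgroup.coe_mul, MulMemClass.mk_mul_mk]
        group } with hwdef
  have hw_apply : ∀ (a : ↥A), ((w a : ↥A) : G) = z * (a : G) * z⁻¹ := fun a => rfl
  have hw_pow : ∀ (i : ℕ) (a : ↥A), (((w ^ i) a : ↥A) : G) = z ^ i * (a : G) * (z ^ i)⁻¹ := by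
    intro i
    induction i with
    | zero => intro a; simp
    | succ i ih =>
      intro a
      rw [aut_pow_succ (M := ↥A) w i a, hw_apply, ih]
      group
  -- the cocycle in G
  set F : ℕ → G := fun i => σ ((x₀ : G) ^ i) * (z ^ i)⁻¹ with hFdef
  have hF0 : F 0 = 1 := by simp [hFdef]
  have hFs : ∀ i, F (i + 1) = F i * (z ^ i * b * (z ^ i)⁻¹) := by
    intro i
    rw [hFdef]
    simp only []
    rw [pow_succ, pow_succ, map_mul, hbdef]
    group
  have hFA : ∀ i, F i ∈ A := by
    intro i
    induction i with
    | zero => rw [hF0]; exact one_mem A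
    | succ i ih =>
      rw [hFs i]
      exact mul_mem ih (nA.conj_mem b hbA (z ^ i))
  -- surjectivity of F onto A
  have hzpow_nat : ∀ (g : G) (j : ℤ), ∃ i : ℕ, g ^ j = g ^ i := by
    intro g j
    set N := Nat.card G with hN
    have hN0 : 0 < N := Nat.card_pos
    refine ⟨(j % (N : ℤ)).toNat, ?_⟩
    have hmod : (0:ℤ) ≤ j % (N : ℤ) := Int.emod_nonneg j (by positivity)
    conv_lhs => rw [← Int.mul_ediv_add_emod j (N : ℤ)]
    rw [zpow_add, zpow_mul]
    have hgN : g ^ (N : ℤ) = 1 := by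
      rw [zpow_natCast]
      exact pow_card_eq_one'
    rw [hgN, one_zpow, one_mul, ← zpow_natCast]
    congr 1
    omega
  have hFsurj : ∀ a : G, a ∈ A → ∃ i, F i = a := by
    intro a ha
    obtain ⟨s, hsmem, k, hkH, hdecomp⟩ := hfact a
    obtain ⟨h, hhH, rfl⟩ := Subgroup.mem_map.mp hsmem
    obtain ⟨j, hj⟩ := Subgroup.mem_zpowers_iff.mp (hx₀ ⟨h, hhH⟩)
    have hcoe : (x₀ : G) ^ j = h := by
      have h2 := congrArg (Subgroup.subtype H) hj
      rw [map_zpow] at h2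
      exact h2
    obtain ⟨i, hi⟩ := hzpow_nat (x₀ : G) j
    refine ⟨i, ?_⟩
    have hdecomp' : a = F i * (z ^ i * k) := by
      rw [hdecomp, ← hcoe, hi, hFdef]
      simp only []
      rw [← zpow_natCast (x₀ : G) i]
      have hcoeσ : σ.toMonoidHom ((x₀ : G) ^ (i:ℤ)) = σ ((x₀ : G) ^ (i:ℤ)) := rfl
      rw [hcoeσ]
      group
    have hzk : z ^ i * k ∈ H ⊓ A := by
      constructor
      · exact mul_mem (Subgroup.pow_mem H hzH i) hkH
      · have h1 : z ^ i * k = (F i)⁻¹ * a := by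
          rw [hdecomp']
          group
        rw [h1]
        exact mul_mem (Subgroup.inv_mem A (hFA i)) ha
    rw [hHA, Subgroup.mem_bot] at hzk
    rw [hdecomp', hzk, mul_one]
  -- package as a cocycle on ↥A
  set bA : ↥A := ⟨b, hbA⟩ with hbA'
  set f : ℕ → ↥A := fun i => ⟨F i, hFA i⟩ with hfdef
  have hf0 : f 0 = 1 := by
    ext
    exact hF0
  have hfs : ∀ i, f (i + 1) = f i * (w ^ i) bA := by
    intro i
    ext
    rw [hfdef]
    simp only [Subgroup.coe_mul]
    rw [hw_pow i bA]
    exact hFs i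
  have hfsurj : ∀ m : ↥A, ∃ i, f i = m := by
    intro m
    obtain ⟨i, hi⟩ := hFsurj (m : G) m.2
    exact ⟨i, Subtype.ext hi⟩
  obtain ⟨xA, hxA⟩ := Stmt6Aux.core w bA f hf0 hfs hfsurj
  refine ⟨(Subgroup.zpowers xA).map A.subtype, Subgroup.map_subtype_le _, ?_, ?_⟩
  · have e := Subgroup.equivMapOfInjective (Subgroup.zpowers xA) A.subtype
      (Subgroup.subtype_injective A)
    have h1 : IsCyclic ↥(Subgroup.zpowers xA) := isCyclic_zpowers xA
    exact isCyclic_of_surjective e e.surjective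
  · have h1 : ((Subgroup.zpowers xA).map A.subtype).subgroupOf A = Subgroup.zpowers xA := by
      rw [Subgroup.subgroupOf]
      exact Subgroup.comap_map_eq_self_of_injective (Subgroup.subtype_injective A) _
    rw [Subgroup.relIndex, h1]
    exact hxA
end

section
/- Under the hypotheses of the previous abelian-by-cyclic setting, if moreover G = A ⋊ H with H = ⟨h⟩ cyclic, H ∩ sHs = {1} and G = sHs·H, and A is a p-group for some prime p, then writing shs = ah with a ∈ A and n = |A| = |H|, the element b = ∏_{i=0}^{q−1} hⁱ a h⁻ⁱ (where q = n/p) is a nontrivial element of Z(G) ∩ A. -/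
/-!
Conjugation by `h` is an endomorphism `T = 1 + D` of the abelian `p`-group `A` with
`T ^ p ^ e = 1`. Since `p` is nilpotent in `End A`, so is `D`; hence the ranges of the powers
`D ^ i` decrease strictly until they vanish, so `p ^ (e - i)` kills `D ^ i`. As
`p ^ (e - i)` divides `(p ^ (e - 1)).choose i`, the binomial expansion gives
`T ^ p ^ (e - 1) = 1`: `h ^ q` centralises `A`, where `q = p ^ (e - 1)`.

Since `(a * h) ^ q = b * h ^ q` and `σ h = a * h`, `b = 1` would put `h ^ q ≠ 1` into
`σ ⟨h⟩ ∩ ⟨h⟩`. Expanding `(a * h) ^ (q + 1)` in two ways, using that `h ^ q` commutes with `a`,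
shows that `b` commutes with `h`; it also commutes with `A`, so it is central.
-/

theorem Nat.Prime.pow_dvd_choose_prime_pow {p k i : ℕ} (hp : p.Prime) (hi0 : i ≠ 0)
    (hik : i ≤ p ^ k) : p ^ (k + 1 - i) ∣ (p ^ k).choose i := by
  rw [hp.pow_dvd_iff_le_factorization (Nat.choose_pos hik).ne',
    Nat.factorization_choose_prime_pow hp hik hi0]
  have := Nat.factorization_lt p hi0
  omega

theorem isNilpotent_sub_one_of_pow_prime_pow_eq_one {R : Type*} [Ring R] {p : ℕ} (hp : p.Prime)
    (hpR : IsNilpotent (p : R)) {T : R} {n : ℕ} (hT : T ^ p ^ n = 1) : IsNilpotent (T - 1) := by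
  obtain ⟨r, hr⟩ := (Commute.one_right (T - 1)).exists_add_pow_prime_pow_eq hp n
  rw [sub_add_cancel, hT, one_pow, mul_one, mul_assoc] at hr
  have hD : (T - 1) ^ p ^ n = p * -((T - 1) * r) := by
    rw [mul_neg, eq_neg_iff_add_eq_zero]
    rwa [add_right_comm, eq_comm, add_eq_right] at hr
  obtain ⟨k, hk⟩ := hpR
  exact ⟨p ^ n * k, by rw [pow_mul, hD, (Nat.cast_commute p _).mul_pow, hk, zero_mul]⟩

theorem AddSubgroup.card_dvd_pow_pred_of_lt {M : Type*} [AddGroup M] {p k : ℕ} (hp : p.Prime)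
    {H K : AddSubgroup M} [Finite K] (hHK : H < K) (hK : Nat.card K ∣ p ^ k) :
    Nat.card H ∣ p ^ (k - 1) := by
  obtain ⟨j, hjk, hj⟩ := (Nat.dvd_prime_pow hp).1 hK
  obtain ⟨s, hsj, hs⟩ := (Nat.dvd_prime_pow hp).1 (hj ▸ AddSubgroup.card_dvd_of_le hHK.le)
  have hsj' : s ≠ j := by
    rintro rfl
    exact hHK.ne (AddSubgroup.eq_of_le_of_card_ge hHK.le (by rw [hs, hj]))
  rw [hs]
  exact Nat.pow_dvd_pow p (by omega)

namespace AddMonoid.End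

variable {M : Type*} [AddCommGroup M]

theorem range_pow_succ (D : AddMonoid.End M) (i : ℕ) :
    (D ^ (i + 1)).range = (D ^ i).range.map D := by
  rw [pow_succ']
  exact AddMonoidHom.range_comp _ _

theorem range_pow_succ_le (D : AddMonoid.End M) (i : ℕ) :
    (D ^ (i + 1)).range ≤ (D ^ i).range := by
  rw [pow_succ]
  exact (AddMonoidHom.range_comp _ _).trans_le (AddSubgroup.map_le_range _ _)

theorem range_pow_eq_bot_of_range_pow_succ_eq {D : AddMonoid.End M} (hD : IsNilpotent D) {i : ℕ}
    (hi : (D ^ (i + 1)).range = (D ^ i).range) : (D ^ i).range = ⊥ := by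
  have hstable : ∀ j, (D ^ (i + j)).range = (D ^ i).range := by
    intro j
    induction j with
    | zero => rfl
    | succ j ih => rw [← add_assoc, range_pow_succ, ih, ← range_pow_succ, hi]
  obtain ⟨n, hn⟩ := hD
  rw [← hstable n, pow_add, hn, mul_zero]
  exact AddMonoidHom.range_zero

variable {p e : ℕ} [Finite M]

theorem card_range_pow_dvd (hp : p.Prime) (hM : Nat.card M = p ^ e) {D : AddMonoid.End M}
    (hD : IsNilpotent D) (i : ℕ) : Nat.card (D ^ i).range ∣ p ^ (e - i) := by
  induction i with
  | zero =>
    rw [Nat.sub_zero, ← hM]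
    exact (AddSubgroup.card_dvd_of_le le_top).trans (AddSubgroup.card_top (G := M)).dvd
  | succ i ih =>
    by_cases hstab : (D ^ (i + 1)).range = (D ^ i).range
    · rw [hstab, range_pow_eq_bot_of_range_pow_succ_eq hD hstab, AddSubgroup.card_bot]
      exact one_dvd _
    · rw [← Nat.sub_sub]
      exact AddSubgroup.card_dvd_pow_pred_of_lt hp
        (lt_of_le_of_ne (range_pow_succ_le D i) hstab) ih

theorem natCast_pow_sub_mul_pow_eq_zero (hp : p.Prime) (hM : Nat.card M = p ^ e)
    {D : AddMonoid.End M} (hD : IsNilpotent D) (i : ℕ) :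
    ((p ^ (e - i) : ℕ) : AddMonoid.End M) * D ^ i = 0 := by
  obtain ⟨c, hc⟩ := card_range_pow_dvd hp hM hD i
  ext x
  have hx : Nat.card (D ^ i).range • (D ^ i) x = 0 :=
    congrArg Subtype.val (card_nsmul_eq_zero' (x := (⟨(D ^ i) x, x, rfl⟩ : (D ^ i).range)))
  show p ^ (e - i) • (D ^ i) x = 0
  rw [hc, mul_nsmul, hx, nsmul_zero]

theorem pow_prime_pow_pred_eq_one (hp : p.Prime) (hM : Nat.card M = p ^ e)
    {T : AddMonoid.End M} (hT : T ^ p ^ e = 1) : T ^ p ^ (e - 1) = 1 := by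
  have hpM : IsNilpotent (p : AddMonoid.End M) := by
    refine ⟨e, ?_⟩
    ext x
    rw [← Nat.cast_pow, ← hM, AddMonoid.End.natCast_apply]
    exact card_nsmul_eq_zero'
  set D := T - 1
  have hD : IsNilpotent D := isNilpotent_sub_one_of_pow_prime_pow_eq_one hp hpM hT
  have hterm : ∀ m ∈ Finset.range (p ^ (e - 1) + 1), m ≠ 0 →
      D ^ m * 1 ^ (p ^ (e - 1) - m) * ((p ^ (e - 1)).choose m : AddMonoid.End M) = 0 := by
    intro m hm hm0
    rw [one_pow, mul_one, ← (Nat.cast_commute _ _).eq]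
    rcases le_or_gt e m with hem | hme
    · have hDe := natCast_pow_sub_mul_pow_eq_zero hp hM hD e
      rw [Nat.sub_self, pow_zero, Nat.cast_one, one_mul] at hDe
      rw [show D ^ m = 0 by rw [← Nat.sub_add_cancel hem, pow_add, hDe, mul_zero], mul_zero]
    · have hmq : m ≤ p ^ (e - 1) := (Nat.lt_pow_self hp.one_lt).le.trans' (by omega)
      obtain ⟨c, hc⟩ := hp.pow_dvd_choose_prime_pow hm0 hmq
      rw [hc, show e - 1 + 1 - m = e - m by omega, mul_comm, Nat.cast_mul, mul_assoc,
        natCast_pow_sub_mul_pow_eq_zero hp hM hD m, mul_zero]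
  calc T ^ p ^ (e - 1) = (D + 1) ^ p ^ (e - 1) := by rw [sub_add_cancel]
    _ = 1 := by
      rw [(Commute.one_right D).add_pow, Finset.sum_eq_single_of_mem 0 (by simp) hterm]
      simp

end AddMonoid.End

theorem Monoid.End.pow_prime_pow_pred_eq_one {A : Type*} [CommGroup A] [Finite A] {p e : ℕ}
    (hp : p.Prime) (hA : Nat.card A = p ^ e) {f : Monoid.End A} (hf : f ^ p ^ e = 1) :
    f ^ p ^ (e - 1) = 1 := by
  apply (monoidEndToAdditive A).injective
  rw [map_pow, map_one]
  exact AddMonoid.End.pow_prime_pow_pred_eq_one hp (by rwa [Nat.card_congr Additive.toMul])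
    (by rw [← map_pow, hf, map_one])

open scoped IsMulCommutative in
theorem Subgroup.commute_pow_prime_pow_pred_of_mem {G : Type*} [Group G] {A : Subgroup G}
    [A.Normal] [IsMulCommutative A] {p e : ℕ} (hp : p.Prime) (hA : Nat.card A = p ^ e) {h : G}
    (hh : h ^ p ^ e = 1) {x : G} (hx : x ∈ A) : Commute (h ^ p ^ (e - 1)) x := by
  have : Finite A := Nat.finite_of_card_ne_zero (by rw [hA]; exact pow_ne_zero _ hp.ne_zero)
  let conj : G →* Monoid.End A :=
    (MulDistribMulAction.toMonoidEnd (ConjAct G) A).comp ConjAct.toConjAct.toMonoidHom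
  have hfix : conj (h ^ p ^ (e - 1)) = 1 := by
    rw [map_pow]
    exact Monoid.End.pow_prime_pow_pred_eq_one hp hA (by rw [← map_pow, hh, map_one])
  have hconj := congrArg Subtype.val (DFunLike.congr_fun hfix ⟨x, hx⟩)
  exact mul_inv_eq_iff_eq_mul.1 hconj

theorem mul_pow_eq_prod_conj_mul_pow {G : Type*} [Group G] (a h : G) (k : ℕ) :
    (a * h) ^ k = ((List.range k).map fun i => h ^ i * a * (h ^ i)⁻¹).prod * h ^ k := by
  induction k with
  | zero => simp
  | succ k ih =>
    rw [pow_succ, ih, List.range_succ, List.map_append, List.prod_append]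
    simp only [List.map_cons, List.map_nil, List.prod_cons, List.prod_nil]
    group

theorem commute_of_mul_pow_eq_mul_pow {G : Type*} [Group G] {a h b : G} {k : ℕ}
    (hk : (a * h) ^ k = b * h ^ k) (hak : Commute a (h ^ k)) (hab : Commute a b) :
    Commute h b := by
  have key : a * (h * b) * h ^ k = a * (b * h) * h ^ k :=
    calc a * (h * b) * h ^ k = (a * h) * (b * h ^ k) := by simp only [mul_assoc]
      _ = (a * h) ^ k * (a * h) := by rw [← hk, pow_mul_comm']
      _ = b * (h ^ k * a) * h := by rw [hk]; simp only [mul_assoc]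
      _ = a * b * (h ^ k * h) := by rw [← hak.eq, ← mul_assoc, ← hab.eq]; simp only [mul_assoc]
      _ = a * (b * h) * h ^ k := by rw [← pow_succ, pow_succ']; simp only [mul_assoc]
  exact mul_left_cancel (mul_right_cancel key)

theorem stmt_7_general {G : Type*} [Group G]
    (p : ℕ) (hp : p.Prime) (e : ℕ) (he : 1 ≤ e)
    (A : Subgroup G) [nA : A.Normal]
    (habel : ∀ x ∈ A, ∀ y ∈ A, x * y = y * x)
    (h : G)
    (hcardA : Nat.card A = p ^ e)
    (hcardH : Nat.card (Subgroup.zpowers h) = p ^ e)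
    (hgen : ∀ g : G, ∃ x ∈ A, ∃ k : ℤ, g = x * h ^ k)
    (σ : G ≃* G)
    (hσH : (Subgroup.zpowers h).map σ.toMonoidHom ⊓ Subgroup.zpowers h = ⊥)
    (a : G) (ha : a ∈ A) (hσh : σ h = a * h)
    (b : G)
    (hb : b = ((List.range (p ^ (e - 1))).map fun i => h ^ i * a * (h ^ i)⁻¹).prod) :
    b ≠ 1 ∧ b ∈ A ∧ b ∈ Subgroup.center G := by
  have : IsMulCommutative A := isMulCommutative_iff.2 fun x y => Subtype.ext (habel _ x.2 _ y.2)
  have hord : orderOf h = p ^ e := Nat.card_zpowers h ▸ hcardH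
  have hpow : (a * h) ^ p ^ (e - 1) = b * h ^ p ^ (e - 1) :=
    hb ▸ mul_pow_eq_prod_conj_mul_pow a h _
  have hbA : b ∈ A := hb ▸ A.list_prod_mem (by simpa using fun i _ => nA.conj_mem a ha (h ^ i))
  refine ⟨?_, hbA, ?_⟩
  · rintro rfl
    have hfix : h ^ p ^ (e - 1) ∈ (Subgroup.zpowers h).map σ.toMonoidHom ⊓ Subgroup.zpowers h :=
      ⟨⟨_, pow_mem (Subgroup.mem_zpowers h) _, by
        rw [MulEquiv.coe_toMonoidHom, map_pow, hσh, hpow, one_mul]⟩,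
        pow_mem (Subgroup.mem_zpowers h) _⟩
    rw [hσH, Subgroup.mem_bot] at hfix
    refine pow_ne_one_of_lt_orderOf (pow_ne_zero _ hp.ne_zero) ?_ hfix
    exact hord ▸ Nat.pow_lt_pow_right hp.one_lt (by omega)
  · have hha : Commute (h ^ p ^ (e - 1)) a :=
      A.commute_pow_prime_pow_pred_of_mem hp hcardA (hord ▸ pow_orderOf_eq_one h) ha
    have hhb : Commute h b := commute_of_mul_pow_eq_mul_pow hpow hha.symm (habel a ha b hbA)
    refine Subgroup.mem_center_iff.2 fun g => ?_
    obtain ⟨x, hx, k, rfl⟩ := hgen g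
    exact (Commute.mul_left (habel x hx b hbA) (hhb.zpow_left k)).eq

/-- In a finite `p`-group `G = A ⋊ ⟨h⟩` with `A` abelian of order `pᵉ`,
`⟨h⟩` of order `pᵉ`, an order-2 automorphism `σ` with `σ(⟨h⟩) ∩ ⟨h⟩ = 1` and
`σ(⟨h⟩)·⟨h⟩ = G`, writing `σ h = a·h` with `a ∈ A`, the element
`b = ∏_{i<p^{e-1}} hⁱ a h⁻ⁱ` is a nontrivial element of `Z(G) ∩ A`. -/
theorem stmt_7 {G : Type*} [Group G] [Finite G]
    (p : ℕ) (hp : p.Prime) (e : ℕ) (he : 1 ≤ e)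
    (A : Subgroup G) [nA : A.Normal]
    (habel : ∀ x ∈ A, ∀ y ∈ A, x * y = y * x)
    (h : G)
    (hcardA : Nat.card A = p ^ e)
    (hcardH : Nat.card (Subgroup.zpowers h) = p ^ e)
    (hAH : A ⊓ Subgroup.zpowers h = ⊥)
    (hgen : ∀ g : G, ∃ x ∈ A, ∃ k : ℤ, g = x * h ^ k)
    (σ : G ≃* G) (hσ2 : ∀ g : G, σ (σ g) = g)
    (hσA : A.map σ.toMonoidHom = A)
    (hσH : (Subgroup.zpowers h).map σ.toMonoidHom ⊓ Subgroup.zpowers h = ⊥)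
    (hfact : ∀ g : G, ∃ u ∈ (Subgroup.zpowers h).map σ.toMonoidHom,
      ∃ v ∈ Subgroup.zpowers h, g = u * v)
    (a : G) (ha : a ∈ A) (hσh : σ h = a * h)
    (b : G)
    (hb : b = ((List.range (p ^ (e - 1))).map fun i => h ^ i * a * (h ^ i)⁻¹).prod) :
    b ≠ 1 ∧ b ∈ A ∧ b ∈ Subgroup.center G :=
  stmt_7_general p hp e he A (nA := nA) habel h hcardA hcardH hgen σ hσH a ha hσh b hb
end

section
/- Let G = ⟨x,y⟩ be a finite metacyclic group with cyclic normal subgroup ⟨x⟩, embedded in G ⋊ ⟨s⟩ where s has order 2, normalizes ⟨x⟩, and centralizes G/⟨x⟩. Suppose H < G satisfies G = sHs·H, and let N = H ∩ sHs. Then N is normal in G, G = ⟨x⟩·H, and H ∩ ⟨x⟩ is contained in N; moreover |G : H| = |H : N|. -/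
/-!
Write `σ` for conjugation by `s` and `B = H ⊓ ⟨x⟩`. A subgroup `⟨xⁿ⟩` of `⟨x⟩` is mapped into
itself by every endomorphism sending `x` into `⟨x⟩`, so `σ B ≤ B ≤ H`, which is `H ⊓ ⟨x⟩ ≤ N`.
As `G / ⟨x⟩` is cyclic, commutators of `H` lie in `B`, and for `h ∈ H`, `n ∈ N` the identity
`σ h * n * (σ h)⁻¹ = n * σ ⁅(σ n)⁻¹, h⁆` shows that `σ H` conjugates `N` into `H`. Since
`G = H * σ H`, every `G`-conjugate of `N` lies in `H`, and applying `σ`, also in `σ H`. Finally `H`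
acts transitively on the left cosets of `σ H` meeting `G`, so `|H : N| = |G : σ H| = |G : H|`.
-/

open Subgroup
open scoped commutatorElement

section

variable {K : Type*} [Group K]

theorem map_le_of_le_zpowers {x : K} {B : Subgroup K} (hB : B ≤ zpowers x) (φ : K →* K)
    (hφ : φ x ∈ zpowers x) : B.map φ ≤ B := by
  obtain ⟨n, rfl⟩ := (le_zpowers_iff x B).mp hB
  obtain ⟨k, hk⟩ := mem_zpowers_iff.mp hφ
  rw [MonoidHom.map_zpowers, zpowers_le, map_pow, ← hk, ← zpow_natCast, ← zpow_natCast,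
    ← zpow_mul, mul_comm, zpow_mul]
  exact zpow_mem_zpowers _ _

section Metacyclic

variable {x y : K}

theorem exists_mem_zpowers_mul_zpow_of_mem_closure
    (hy : ∀ n : ℤ, ∀ w ∈ zpowers x, y ^ n * w * (y ^ n)⁻¹ ∈ zpowers x) {g : K}
    (hg : g ∈ closure {x, y}) : ∃ a ∈ zpowers x, ∃ n : ℤ, g = a * y ^ n := by
  induction hg using closure_induction with
  | mem g hg =>
    rcases hg with rfl | rfl
    · exact ⟨g, mem_zpowers g, 0, by simp⟩
    · exact ⟨1, one_mem _, 1, by simp⟩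
  | one => exact ⟨1, one_mem _, 0, by simp⟩
  | mul g g' _ _ ihg ihg' =>
    obtain ⟨a, ha, m, rfl⟩ := ihg
    obtain ⟨b, hb, n, rfl⟩ := ihg'
    exact ⟨a * (y ^ m * b * (y ^ m)⁻¹), mul_mem ha (hy m b hb), m + n, by group⟩
  | inv g _ ihg =>
    obtain ⟨a, ha, m, rfl⟩ := ihg
    exact ⟨y ^ (-m) * a⁻¹ * (y ^ (-m))⁻¹, hy (-m) _ (inv_mem ha), -m, by group⟩

theorem commutatorElement_mem_zpowers_of_mem_closure
    (hy : ∀ n : ℤ, ∀ w ∈ zpowers x, y ^ n * w * (y ^ n)⁻¹ ∈ zpowers x) {g g' : K}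
    (hg : g ∈ closure {x, y}) (hg' : g' ∈ closure {x, y}) : ⁅g, g'⁆ ∈ zpowers x := by
  obtain ⟨a, ha, m, rfl⟩ := exists_mem_zpowers_mul_zpow_of_mem_closure hy hg
  obtain ⟨b, hb, n, rfl⟩ := exists_mem_zpowers_mul_zpow_of_mem_closure hy hg'
  have h : ⁅a * y ^ m, b * y ^ n⁆ =
      a * (y ^ m * b * (y ^ m)⁻¹) * (y ^ n * a⁻¹ * (y ^ n)⁻¹) * b⁻¹ := by
    rw [commutatorElement_def]
    group
  rw [h]
  exact mul_mem (mul_mem (mul_mem ha (hy m b hb)) (hy n _ (inv_mem ha))) (inv_mem hb)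

end Metacyclic

theorem stabilizer_coe_one_eq_subgroupOf (L H : Subgroup K) :
    MulAction.stabilizer H ((1 : K) : K ⧸ L) = L.subgroupOf H := by
  ext h
  change ((h * 1 : K) : K ⧸ L) = _ ↔ _
  rw [QuotientGroup.eq, mem_subgroupOf]
  simp

theorem relIndex_eq_ncard_orbit (L H : Subgroup K) :
    L.relIndex H = (MulAction.orbit H ((1 : K) : K ⧸ L)).ncard := by
  rw [relIndex, ← stabilizer_coe_one_eq_subgroupOf, MulAction.index_stabilizer]

theorem relIndex_eq_of_le_of_forall_mem_mul {L H G : Subgroup K} (hHG : H ≤ G)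
    (hG : ∀ g ∈ G, ∃ h ∈ H, ∃ l ∈ L, g = h * l) : L.relIndex H = L.relIndex G := by
  rw [relIndex_eq_ncard_orbit, relIndex_eq_ncard_orbit]
  congr 1
  ext q
  constructor
  · rintro ⟨h, rfl⟩
    exact ⟨⟨h, hHG h.2⟩, rfl⟩
  · rintro ⟨g, rfl⟩
    obtain ⟨h, hh, l, hl, hg⟩ := hG g g.2
    refine ⟨⟨h, hh⟩, ?_⟩
    change ((h * 1 : K) : K ⧸ L) = ((g * 1 : K) : K ⧸ L)
    rw [QuotientGroup.eq, hg]
    simpa using hl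

section TwistedFactorization

variable {σ : MulAut K} {G H : Subgroup K}

theorem mem_inf_map_iff (hσ : Function.Involutive σ) {u : K} :
    u ∈ H ⊓ H.map σ.toMonoidHom ↔ u ∈ H ∧ σ u ∈ H := by
  rw [mem_inf, mem_map_equiv, σ.symm_apply_eq.mpr (hσ u).symm]

theorem map_eq_self_of_involutive (hσ : Function.Involutive σ) (hσG : ∀ g ∈ G, σ g ∈ G) :
    G.map σ.toMonoidHom = G :=
  le_antisymm (map_le_iff_le_comap.mpr hσG) fun g hg ↦ ⟨σ g, hσG g hg, hσ g⟩

theorem exists_eq_mul_apply (hfact : ∀ g ∈ G, ∃ h₁ ∈ H, ∃ h₂ ∈ H, g = σ h₁ * h₂) {g : K}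
    (hg : g ∈ G) : ∃ h₁ ∈ H, ∃ h₂ ∈ H, g = h₁ * σ h₂ := by
  obtain ⟨h₁, hh₁, h₂, hh₂, hg'⟩ := hfact g⁻¹ (inv_mem hg)
  refine ⟨h₂⁻¹, inv_mem hh₂, h₁⁻¹, inv_mem hh₁, ?_⟩
  rw [map_inv, ← mul_inv_rev, ← hg', inv_inv]

theorem apply_mul_mul_inv_mem (hσ : Function.Involutive σ)
    (hcomm : ∀ h ∈ H, ∀ h' ∈ H, σ ⁅h, h'⁆ ∈ H) {h n : K} (hh : h ∈ H) (hn : n ∈ H)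
    (hσn : σ n ∈ H) : σ h * n * (σ h)⁻¹ ∈ H := by
  have key : σ h * n * (σ h)⁻¹ = n * σ ⁅(σ n)⁻¹, h⁆ := by
    simp only [commutatorElement_def, map_mul, map_inv, hσ n]
    group
  rw [key]
  exact mul_mem hn (hcomm _ (inv_mem hσn) _ hh)

theorem conj_mem_of_apply_mem (hσ : Function.Involutive σ)
    (hfact : ∀ g ∈ G, ∃ h₁ ∈ H, ∃ h₂ ∈ H, g = σ h₁ * h₂)
    (hcomm : ∀ h ∈ H, ∀ h' ∈ H, σ ⁅h, h'⁆ ∈ H) {g n : K} (hg : g ∈ G) (hn : n ∈ H)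
    (hσn : σ n ∈ H) : g * n * g⁻¹ ∈ H := by
  obtain ⟨h₁, hh₁, h₂, hh₂, rfl⟩ := exists_eq_mul_apply hfact hg
  have h : h₁ * σ h₂ * n * (h₁ * σ h₂)⁻¹ = h₁ * (σ h₂ * n * (σ h₂)⁻¹) * h₁⁻¹ := by group
  rw [h]
  exact mul_mem (mul_mem hh₁ (apply_mul_mul_inv_mem hσ hcomm hh₂ hn hσn)) (inv_mem hh₁)

theorem conj_mem_inf_map (hσ : Function.Involutive σ) (hσG : ∀ g ∈ G, σ g ∈ G)
    (hfact : ∀ g ∈ G, ∃ h₁ ∈ H, ∃ h₂ ∈ H, g = σ h₁ * h₂)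
    (hcomm : ∀ h ∈ H, ∀ h' ∈ H, σ ⁅h, h'⁆ ∈ H) {g n : K} (hg : g ∈ G)
    (hn : n ∈ H ⊓ H.map σ.toMonoidHom) : g * n * g⁻¹ ∈ H ⊓ H.map σ.toMonoidHom := by
  rw [mem_inf_map_iff hσ] at hn ⊢
  refine ⟨conj_mem_of_apply_mem hσ hfact hcomm hg hn.1 hn.2, ?_⟩
  rw [map_mul, map_mul, map_inv]
  exact conj_mem_of_apply_mem hσ hfact hcomm (hσG g hg) hn.2 (by rw [hσ n]; exact hn.1)

theorem relIndex_eq_relIndex_inf_map (hσ : Function.Involutive σ) (hHG : H ≤ G)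
    (hσG : ∀ g ∈ G, σ g ∈ G) (hfact : ∀ g ∈ G, ∃ h₁ ∈ H, ∃ h₂ ∈ H, g = σ h₁ * h₂) :
    H.relIndex G = (H ⊓ H.map σ.toMonoidHom).relIndex H := by
  have hG : ∀ g ∈ G, ∃ h ∈ H, ∃ l ∈ H.map σ.toMonoidHom, g = h * l := by
    intro g hg
    obtain ⟨h₁, hh₁, h₂, hh₂, rfl⟩ := exists_eq_mul_apply hfact hg
    exact ⟨h₁, hh₁, σ h₂, mem_map_of_mem _ hh₂, rfl⟩
  rw [inf_relIndex_left, relIndex_eq_of_le_of_forall_mem_mul hHG hG,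
    ← relIndex_map_map_of_injective (f := σ.toMonoidHom) H G σ.injective,
    map_eq_self_of_involutive hσ hσG]

end TwistedFactorization

end

theorem stmt_8_general {K : Type*} [Group K]
    (x y s : K) (hs2 : s * s = 1)
    (G : Subgroup K) (hG : G = Subgroup.closure ({x, y} : Set K))
    (hxnormal : ∀ g ∈ G, ∀ w ∈ Subgroup.zpowers x, g * w * g⁻¹ ∈ Subgroup.zpowers x)
    (hsx : ∀ w ∈ Subgroup.zpowers x, s * w * s⁻¹ ∈ Subgroup.zpowers x)
    (hsG : ∀ g ∈ G, s * g * s⁻¹ ∈ G)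
    (hscent : ∀ g ∈ G, (s * g * s⁻¹) * g⁻¹ ∈ Subgroup.zpowers x)
    (H : Subgroup K) (hH : H < G)
    (hfact : ∀ g ∈ G, ∃ h₁ ∈ H, ∃ h₂ ∈ H, g = (s * h₁ * s⁻¹) * h₂)
    (N : Subgroup K) (hN : N = H ⊓ H.map (MulAut.conj s).toMonoidHom) :
    (∀ g ∈ G, ∀ w ∈ N, g * w * g⁻¹ ∈ N) ∧
    (∀ g ∈ G, ∃ k : ℤ, ∃ h ∈ H, g = x ^ k * h) ∧
    (H ⊓ Subgroup.zpowers x ≤ N) ∧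
    (H.relIndex G = N.relIndex H) := by
  simp only [← MulAut.conj_apply] at hsx hsG hscent hfact
  set σ := MulAut.conj s
  have hσ : Function.Involutive σ := fun g ↦ by
    rw [← MulAut.mul_apply, ← map_mul, hs2, map_one, MulAut.one_apply]
  have hσB : (H ⊓ zpowers x).map σ.toMonoidHom ≤ H ⊓ zpowers x :=
    map_le_of_le_zpowers inf_le_right _ (hsx x (mem_zpowers x))
  have hcomm : ∀ h ∈ H, ∀ h' ∈ H, σ ⁅h, h'⁆ ∈ H := by
    intro h hh h' hh'
    have hGA : ⁅h, h'⁆ ∈ zpowers x := by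
      subst hG
      exact commutatorElement_mem_zpowers_of_mem_closure
        (fun n ↦ hxnormal _ (zpow_mem (subset_closure (by simp)) n)) (hH.le hh) (hH.le hh')
    have hHH : ⁅h, h'⁆ ∈ H := H.commutator_le_self (commutator_mem_commutator hh hh')
    exact (hσB (mem_map_of_mem _ ⟨hHH, hGA⟩)).1
  subst hN
  refine ⟨fun g hg n hn ↦ conj_mem_inf_map hσ hsG hfact hcomm hg hn, ?_, ?_,
    relIndex_eq_relIndex_inf_map hσ hH.le hsG hfact⟩
  · intro g hg
    obtain ⟨h₁, hh₁, h₂, hh₂, rfl⟩ := hfact g hg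
    obtain ⟨k, hk⟩ := mem_zpowers_iff.mp (hscent h₁ (hH.le hh₁))
    exact ⟨k, h₁ * h₂, mul_mem hh₁ hh₂, by rw [hk]; group⟩
  · intro u hu
    exact (mem_inf_map_iff hσ).mpr ⟨hu.1, (hσB (mem_map_of_mem _ hu)).1⟩

/-- First part of Lemma 3.9: in a finite metacyclic group `G = ⟨x,y⟩` with
`⟨x⟩ ⊴ G` cyclic, with an involution `s` normalizing `⟨x⟩` and centralizing
`G/⟨x⟩`, if `H < G` satisfies `G = sHs·H`, then `N = H ∩ sHs` is normal in
`G`, `G = ⟨x⟩·H`, `H ∩ ⟨x⟩ ≤ N`, and `|G : H| = |H : N|`. -/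
theorem stmt_8 {K : Type*} [Group K] [Finite K]
    (x y s : K) (hs2 : s * s = 1)
    (G : Subgroup K) (hG : G = Subgroup.closure ({x, y} : Set K))
    (hxnormal : ∀ g ∈ G, ∀ w ∈ Subgroup.zpowers x, g * w * g⁻¹ ∈ Subgroup.zpowers x)
    (hsx : ∀ w ∈ Subgroup.zpowers x, s * w * s⁻¹ ∈ Subgroup.zpowers x)
    (hsG : ∀ g ∈ G, s * g * s⁻¹ ∈ G)
    (hscent : ∀ g ∈ G, (s * g * s⁻¹) * g⁻¹ ∈ Subgroup.zpowers x)
    (H : Subgroup K) (hH : H < G)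
    (hfact : ∀ g ∈ G, ∃ h₁ ∈ H, ∃ h₂ ∈ H, g = (s * h₁ * s⁻¹) * h₂)
    (N : Subgroup K) (hN : N = H ⊓ H.map (MulAut.conj s).toMonoidHom) :
    (∀ g ∈ G, ∀ w ∈ N, g * w * g⁻¹ ∈ N) ∧
    (∀ g ∈ G, ∃ k : ℤ, ∃ h ∈ H, g = x ^ k * h) ∧
    (H ⊓ Subgroup.zpowers x ≤ N) ∧
    (H.relIndex G = N.relIndex H) :=
  stmt_8_general x y s hs2 G hG hxnormal hsx hsG hscent H hH hfact N hN
end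

section
/- In a finite metacyclic group G = ⟨x⟩ ⋊ ⟨z⟩ with |⟨x⟩| = |⟨z⟩| = n, where z x z⁻¹ = xᵃ, and with an involution s satisfying s x s = x^{k+1} and s z s = xᵇ z, the factorization G = (sHs)H with H = ⟨z⟩ holds if and only if: (a) b is a unit modulo n, and (b) the sequence α(0), α(1), …, α(n−1), where α(t) = Σ_{i=1}^{t} a^{i−1}, runs over all congruence classes modulo n. -/
/-!
Conjugation by `s` sends `zᵗ` to `(xᵇz)ᵗ = x^(b·α(t)) zᵗ`, so `(s⟨z⟩s)⟨z⟩` is the union of the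
cosets `x^(b·α(t))⟨z⟩` for `t < n`. Every element of `⟨x, z⟩` is some `xᵐzᵗ`, and as
`⟨x⟩ ∩ ⟨z⟩ = 1` the coset `xᵐ⟨z⟩` is one of those exactly when `m ≡ b·α(t) (mod n)`. So the
factorization holds iff `t ↦ b·α(t)` is onto `ZMod n`, i.e. iff `b` is a unit and `α` is onto.
-/

open Finset Subgroup

theorem surjective_const_mul_iff {ι R : Type*} [CommMonoid R] {u : R} {f : ι → R} :
    Function.Surjective (fun i => u * f i) ↔ IsUnit u ∧ Function.Surjective f := by
  refine ⟨fun h => ?_, fun ⟨hu, hf⟩ r => ?_⟩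
  · obtain ⟨i, hi⟩ := h 1
    have hu : IsUnit u := IsUnit.of_mul_eq_one _ hi
    refine ⟨hu, fun r => ?_⟩
    obtain ⟨j, hj⟩ := h (u * r)
    exact ⟨j, hu.mul_left_cancel hj⟩
  · obtain ⟨i, hi⟩ := hf (↑hu.unit⁻¹ * r)
    exact ⟨i, show u * f i = r by rw [hi, ← mul_assoc, hu.mul_val_inv, one_mul]⟩

theorem IsOfFinOrder.exists_pow_eq_of_mem_zpowers {G : Type*} [Group G] {z h : G}
    (hz : IsOfFinOrder z) (hh : h ∈ zpowers z) : ∃ t < orderOf z, z ^ t = h := by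
  classical
  simpa using hz.mem_zpowers_iff_mem_range_orderOf.mp hh

section Metacyclic

variable {G : Type*} [Group G] {x z : G} {a : ℤ}

theorem mul_zpow_eq_zpow_mul_of_conj (hconj : z * x * z⁻¹ = x ^ a) (c : ℤ) :
    z * x ^ c = x ^ (a * c) * z := by
  rw [zpow_mul, ← hconj, conj_zpow, inv_mul_cancel_right]

theorem zpow_mul_pow_eq_of_conj (hconj : z * x * z⁻¹ = x ^ a) (b : ℤ) (t : ℕ) :
    (x ^ b * z) ^ t = x ^ (b * ∑ i ∈ range t, a ^ i) * z ^ t := by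
  induction t with
  | zero => simp
  | succ t ih =>
    rw [pow_succ', ih, mul_assoc, ← mul_assoc z, mul_zpow_eq_zpow_mul_of_conj hconj, ← mul_assoc,
      ← mul_assoc, ← zpow_add, mul_assoc, ← pow_succ', geom_sum_succ]
    congr 2
    ring

theorem exists_zpow_mul_pow_of_mem_closure (hconj : z * x * z⁻¹ = x ^ a)
    (hx : IsOfFinOrder x) (hz : IsOfFinOrder z) {g : G} (hg : g ∈ closure {x, z}) :
    ∃ m : ℤ, ∃ t : ℕ, g = x ^ m * z ^ t := by
  rw [← mem_toSubmonoid, closure_toSubmonoid_of_isOfFinOrder (by simp [hx, hz])] at hg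
  induction hg using Submonoid.closure_induction_left with
  | one => exact ⟨0, 0, by simp⟩
  | mul_left y hy g _ ih =>
    obtain ⟨m, t, rfl⟩ := ih
    rcases hy with rfl | rfl
    · exact ⟨1 + m, t, by rw [zpow_add, zpow_one, mul_assoc]⟩
    · exact ⟨a * m, t + 1, by
        rw [← mul_assoc, mul_zpow_eq_zpow_mul_of_conj hconj, mul_assoc, pow_succ']⟩

theorem zpow_eq_zpow_of_eq_zpow_mul (hxz : zpowers x ⊓ zpowers z = ⊥) {m c : ℤ} {h : G}
    (hh : h ∈ zpowers z) (he : x ^ m = x ^ c * h) : x ^ m = x ^ c := by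
  have hmem : h ∈ zpowers x ⊓ zpowers z := by
    refine mem_inf.mpr ⟨?_, hh⟩
    rw [← inv_mul_eq_of_eq_mul he]
    exact mul_mem (inv_mem (zpow_mem (mem_zpowers x) c)) (zpow_mem (mem_zpowers x) m)
  rw [hxz, mem_bot] at hmem
  rw [he, hmem, mul_one]

theorem exists_zpow_eq_conj_mul_iff {s : G} {b : ℤ} {n : ℕ} (hconj : z * x * z⁻¹ = x ^ a)
    (hsz : s * z * s⁻¹ = x ^ b * z) (hx : orderOf x = n) (hz : orderOf z = n) (hn : 0 < n)
    (hxz : zpowers x ⊓ zpowers z = ⊥) (m : ℤ) :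
    (∃ h₁ ∈ zpowers z, ∃ h₂ ∈ zpowers z, x ^ m = s * h₁ * s⁻¹ * h₂) ↔
      ∃ t : Fin n, (b : ZMod n) * ((∑ i ∈ range t, a ^ i : ℤ) : ZMod n) = m := by
  have hs_conj_pow (t : ℕ) : s * z ^ t * s⁻¹ = x ^ (b * ∑ i ∈ range t, a ^ i) * z ^ t := by
    rw [← conj_pow, hsz, zpow_mul_pow_eq_of_conj hconj]
  constructor
  · rintro ⟨h₁, hh₁, h₂, hh₂, he⟩
    obtain ⟨t, ht, rfl⟩ := (orderOf_pos_iff.mp (hz ▸ hn)).exists_pow_eq_of_mem_zpowers hh₁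
    rw [hs_conj_pow, mul_assoc] at he
    have hxm := zpow_eq_zpow_of_eq_zpow_mul hxz (mul_mem (pow_mem (mem_zpowers z) t) hh₂) he
    rw [zpow_eq_zpow_iff_modEq, hx, ← ZMod.intCast_eq_intCast_iff,
      Int.cast_mul] at hxm
    exact ⟨⟨t, hz ▸ ht⟩, hxm.symm⟩
  · rintro ⟨t, ht⟩
    refine ⟨z ^ (t : ℕ), pow_mem (mem_zpowers z) _, (z ^ (t : ℕ))⁻¹,
      inv_mem (pow_mem (mem_zpowers z) _), ?_⟩
    rw [hs_conj_pow, mul_inv_cancel_right, zpow_eq_zpow_iff_modEq, hx,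
      ← ZMod.intCast_eq_intCast_iff, Int.cast_mul]
    exact ht.symm

end Metacyclic

theorem stmt_9_general {K : Type*} [Group K]
    (n : ℕ) (hn : 0 < n) (x z s : K) (a b : ℤ)
    (hx : orderOf x = n) (hz : orderOf z = n)
    (hxz : Subgroup.zpowers x ⊓ Subgroup.zpowers z = ⊥)
    (hconj : z * x * z⁻¹ = x ^ a)
    (hsz : s * z * s⁻¹ = x ^ b * z) :
    (∀ g ∈ Subgroup.closure ({x, z} : Set K),
        ∃ h₁ ∈ Subgroup.zpowers z, ∃ h₂ ∈ Subgroup.zpowers z,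
          g = s * h₁ * s⁻¹ * h₂) ↔
    (IsUnit (b : ZMod n) ∧
      Function.Surjective
        (fun t : Fin n => ((∑ i ∈ Finset.range t.val, a ^ i : ℤ) : ZMod n))) := by
  have hcoset := exists_zpow_eq_conj_mul_iff hconj hsz hx hz hn hxz
  rw [← surjective_const_mul_iff, Function.Surjective, ZMod.intCast_surjective.forall]
  simp only [← hcoset]
  constructor
  · exact fun h m => h _ (zpow_mem (subset_closure (by simp)) m)
  · intro h g hg
    obtain ⟨m, t, rfl⟩ := exists_zpow_mul_pow_of_mem_closure hconj
      (orderOf_pos_iff.mp (hx ▸ hn)) (orderOf_pos_iff.mp (hz ▸ hn)) hg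
    obtain ⟨h₁, hh₁, h₂, hh₂, he⟩ := h m
    exact ⟨h₁, hh₁, h₂ * z ^ t, mul_mem hh₂ (pow_mem (mem_zpowers z) t), by rw [he, mul_assoc]⟩

/-- In `G = ⟨x⟩ ⋊ ⟨z⟩` with both factors cyclic of order `n`, `z x z⁻¹ = xᵃ`,
and an involution `s` with `s x s = x^{k+1}`, `s z s = xᵇ z`, the factorization
`G = (s⟨z⟩s)·⟨z⟩` holds iff `b` is a unit mod `n` and
`α(0), …, α(n−1)` (with `α(t) = Σ_{i<t} aⁱ`) form a complete residue system mod `n`. -/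
theorem stmt_9 {K : Type*} [Group K]
    (n : ℕ) (hn : 0 < n) (x z s : K) (a k b : ℤ)
    (hx : orderOf x = n) (hz : orderOf z = n)
    (hxz : Subgroup.zpowers x ⊓ Subgroup.zpowers z = ⊥)
    (hconj : z * x * z⁻¹ = x ^ a)
    (hs2 : s * s = 1)
    (hsx : s * x * s⁻¹ = x ^ (k + 1))
    (hsz : s * z * s⁻¹ = x ^ b * z) :
    (∀ g ∈ Subgroup.closure ({x, z} : Set K),
        ∃ h₁ ∈ Subgroup.zpowers z, ∃ h₂ ∈ Subgroup.zpowers z,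
          g = s * h₁ * s⁻¹ * h₂) ↔
    (IsUnit (b : ZMod n) ∧
      Function.Surjective
        (fun t : Fin n => ((∑ i ∈ Finset.range t.val, a ^ i : ℤ) : ZMod n))) :=
  stmt_9_general n hn x z s a b hx hz hxz hconj hsz
end

section
/- The natural actions of the finite symmetric and alternating groups do not extend properly to 2-by-block-transitive actions: if G = Sym(d) or Alt(d) acts on Ω preserving an equivalence relation ∼, the induced action on blocks is the natural action on d points, and G is transitive on pairs of points in distinct blocks, then the blocks are singletons. -/
/-!
Let `x ≠ y` be blocks and `a` a point over `x`. By 2-by-block transitivity the pointwise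
stabiliser `G_{x,y}` is transitive on pairs of points over `x` and `y`, and its stabiliser of
`a` is transitive on the fibre over `y`. Hence if some `c ∈ G` with `c x = y` commutes with
`G_{x,y}`, that fibre is `{c • a}`; for `Sym(d)` take `c = (x y)`.

For `Alt(d)` with `d ≤ 5`, `G_{x,y} ≅ Alt(d - 2)` has at most 3 elements, too few to be
transitive on a product of two fibres of size at least 2. For `d ≥ 6`, the 3-cycle `c = (x y z)`
commutes with everything fixing `x`, `y`, `z`, so `s ↦ g_s z` embeds the fibre over `y` in
`X ∖ {x, y}`, where `g_s ∈ G_{x,y}` fixes `a` and sends `c • a` to `s`. The simple group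
`Alt(X ∖ {y})` has `(d - 1)!/2 > (d - 2)!` elements, so it acts trivially on that fibre, while
its subgroup `G_{x,y}` acts transitively on it.
-/

open Equiv Equiv.Perm MulAction

theorem Equiv.Perm.commute_swap {α : Type*} [DecidableEq α] {f : Perm α} {x y : α}
    (hx : f x = x) (hy : f y = y) : Commute f (swap x y) := by
  have h := swap_apply_apply f x y
  rw [hx, hy] at h
  exact (eq_mul_inv_iff_mul_eq.mp h).symm

theorem IsSimpleGroup.eq_one_of_card_lt {H K : Type*} [Group H] [Group K] [IsSimpleGroup H]
    [Finite K] (θ : H →* K) (hcard : Nat.card K < Nat.card H) : θ = 1 := by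
  rcases θ.normal_ker.eq_bot_or_eq_top with hker | hker
  · exact absurd (Nat.card_le_card_of_injective θ (θ.ker_eq_bot_iff.mp hker)) hcard.not_ge
  · ext k
    exact θ.mem_ker.mp (hker ▸ Subgroup.mem_top k)

theorem Function.Surjective.injective_of_forall_eq {Ω X : Type*} [Nontrivial X] {π : Ω → X}
    (hsurj : Function.Surjective π) (H : ∀ a b b' : Ω, π a ≠ π b → π b' = π b → b' = b) :
    Function.Injective π := by
  intro b b' hbb'
  obtain ⟨x, hx⟩ := exists_ne (π b)
  obtain ⟨a, rfl⟩ := hsurj x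
  exact (H a b b' hx hbb'.symm).symm

/-- The blocks are the fibres of `π`, and `map_smul` says that the action on blocks is the
given action on `X`. -/
structure IsTwoByBlockTransitive_s13 (G : Type*) {Ω X : Type*} [Group G] [MulAction G X]
    [MulAction G Ω] (π : Ω → X) : Prop where
  map_smul : ∀ (g : G) (ω : Ω), π (g • ω) = g • π ω
  exists_smul_eq : ∀ a b c d : Ω, π a ≠ π b → π c ≠ π d → ∃ g : G, g • a = c ∧ g • b = d

section Fibres

variable {G X Ω : Type*} [Group G] [MulAction G X] [MulAction G Ω] {π : Ω → X}

def stabilizerToPermFibre (hπ : ∀ (g : G) (ω : Ω), π (g • ω) = g • π ω) (y : X) :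
    stabilizer G y →* Perm (π ⁻¹' {y}) where
  toFun g := (toPerm (g : G)).subtypePerm fun ω => by
    simp only [Set.mem_preimage, Set.mem_singleton_iff, toPerm_apply, hπ]
    rw [← smul_left_cancel_iff (g : G) (x := π ω), mem_stabilizer_iff.mp g.2]
  map_one' := by ext; simp
  map_mul' g h := by ext ω; exact mul_smul (g : G) (h : G) (ω : Ω)

theorem smul_eq_self_of_factorial_card_fibre_lt {H : Type*} [Group H] [IsSimpleGroup H]
    (hπ : ∀ (g : G) (ω : Ω), π (g • ω) = g • π ω) {y : X} (φ : H →* stabilizer G y)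
    [Finite (π ⁻¹' {y})] (hcard : (Nat.card (π ⁻¹' {y})).factorial < Nat.card H)
    (k : H) {b : Ω} (hb : π b = y) : (φ k : G) • b = b := by
  have hθ := IsSimpleGroup.eq_one_of_card_lt ((stabilizerToPermFibre hπ y).comp φ)
    (by rwa [Nat.card_perm])
  exact congrArg Subtype.val (DFunLike.congr_fun (DFunLike.congr_fun hθ k) ⟨b, hb⟩)

namespace IsTwoByBlockTransitive_s13

theorem exists_mem_fixingSubgroup (h : IsTwoByBlockTransitive_s13 G π) {a b a' b' : Ω}
    (hab : π a ≠ π b) (ha' : π a' = π a) (hb' : π b' = π b) :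
    ∃ g ∈ fixingSubgroup G ({π a, π b} : Set X), g • a = a' ∧ g • b = b' := by
  obtain ⟨g, hga, hgb⟩ := h.exists_smul_eq a b a' b' hab (by rwa [ha', hb'])
  refine ⟨g, ?_, hga, hgb⟩
  rw [mem_fixingSubgroup_iff]
  rintro _ (rfl | rfl)
  · rw [← h.map_smul, hga, ha']
  · rw [← h.map_smul, hgb, hb']

theorem eq_smul_of_commute (h : IsTwoByBlockTransitive_s13 G π) {c : G} {a w : Ω}
    (hca : π a ≠ π (c • a))
    (hc : ∀ g ∈ fixingSubgroup G ({π a, π (c • a)} : Set X), Commute g c)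
    (hw : π w = π (c • a)) : w = c • a := by
  obtain ⟨g, hg, hga, hgw⟩ := h.exists_mem_fixingSubgroup hca rfl hw
  calc w = g • c • a := hgw.symm
    _ = c • g • a := by rw [← mul_smul, (hc g hg).eq, mul_smul]
    _ = c • a := by rw [hga]

theorem nonempty_fibre_embedding (h : IsTwoByBlockTransitive_s13 G π) {c : G} {a : Ω} {z : X}
    (hca : π a ≠ π (c • a)) (hz : z ∉ ({π a, π (c • a)} : Set X))
    (hc : ∀ g ∈ fixingSubgroup G ({π a, π (c • a), z} : Set X), Commute g c) :
    Nonempty (π ⁻¹' {π (c • a)} ↪ ↥({π a, π (c • a)} : Set X)ᶜ) := by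
  choose g hg hga hgw using fun w : π ⁻¹' {π (c • a)} =>
    h.exists_mem_fixingSubgroup hca rfl w.2
  have hfix w := (mem_fixingSubgroup_iff G).mp (hg w)
  refine ⟨⟨fun w => ⟨g w • z, ?_⟩, fun w w' hww' => ?_⟩⟩
  · rintro (hx | hy)
    · exact hz (.inl (smul_left_cancel _ (hx.trans (hfix w _ (.inl rfl)).symm)))
    · exact hz (.inr (smul_left_cancel _
        ((Set.mem_singleton_iff.mp hy).trans (hfix w _ (.inr rfl)).symm)))
  -- `k` fixes `π a`, `π (c • a)`, `z` and `a`, so it commutes with `c` and fixes `c • a`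
  set k := (g w')⁻¹ * g w
  have hk : Commute k c := by
    have hkfix {p : X} (hp : g w • p = g w' • p) : k • p = p := by
      rw [mul_smul, hp, inv_smul_smul]
    apply hc
    rw [mem_fixingSubgroup_iff]
    rintro _ (rfl | rfl | rfl)
    · exact hkfix ((hfix w _ (.inl rfl)).trans (hfix w' _ (.inl rfl)).symm)
    · exact hkfix ((hfix w _ (.inr rfl)).trans (hfix w' _ (.inr rfl)).symm)
    · exact hkfix (congrArg Subtype.val hww')
  have hka : k • a = a := by rw [mul_smul, hga w, inv_smul_eq_iff, hga w']
  apply Subtype.ext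
  calc (w : Ω) = g w • c • a := (hgw w).symm
    _ = g w' • k • c • a := by
      rw [← mul_smul (g w'), show g w' * k = g w from mul_inv_cancel_left _ _]
    _ = g w' • c • a := by rw [← mul_smul k, hk.eq, mul_smul, hka]
    _ = w' := hgw w'

theorem card_fibre_eq (h : IsTwoByBlockTransitive_s13 G π) {a b : Ω} (hab : π a ≠ π b) :
    Nat.card (π ⁻¹' {π a}) = Nat.card (π ⁻¹' {π b}) := by
  obtain ⟨g, hga, -⟩ := h.exists_smul_eq a b b a hab hab.symm
  refine Nat.card_congr ((toPerm g).subtypeEquiv fun ω => ?_)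
  simp only [Set.mem_preimage, Set.mem_singleton_iff, toPerm_apply, h.map_smul, ← hga]
  exact (smul_left_cancel_iff g).symm

theorem eq_of_card_fixingSubgroup_lt_four [Finite G] (h : IsTwoByBlockTransitive_s13 G π)
    {a b b' : Ω} (hab : π a ≠ π b) (hb' : π b' = π b)
    (hcard : Nat.card (fixingSubgroup G ({π a, π b} : Set X)) < 4) : b' = b := by
  have hfix (g : fixingSubgroup G ({π a, π b} : Set X)) {ω : Ω} (hω : π ω = π a ∨ π ω = π b) :
      π ((g : G) • ω) = π ω := by
    rw [h.map_smul]
    exact (mem_fixingSubgroup_iff G).mp g.2 _ (by simpa [eq_comm] using hω)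
  let θ (g : fixingSubgroup G ({π a, π b} : Set X)) : π ⁻¹' {π a} × π ⁻¹' {π b} :=
    (⟨(g : G) • a, hfix g (.inl rfl)⟩, ⟨(g : G) • b, hfix g (.inr rfl)⟩)
  have hθ : Function.Surjective θ := by
    rintro ⟨⟨a', ha'⟩, ⟨b', hb'⟩⟩
    obtain ⟨g, hg, hga, hgb⟩ := h.exists_mem_fixingSubgroup hab ha' hb'
    exact ⟨⟨g, hg⟩, Prod.ext (Subtype.ext hga) (Subtype.ext hgb)⟩
  have : Finite (π ⁻¹' {π a} × π ⁻¹' {π b}) := .of_surjective θ hθ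
  have : Nonempty (π ⁻¹' {π a}) := ⟨⟨a, rfl⟩⟩
  have : Finite (π ⁻¹' {π b}) := .prod_right (π ⁻¹' {π a})
  have hle := Nat.card_le_card_of_surjective θ hθ
  rw [Nat.card_prod, h.card_fibre_eq hab] at hle
  have : Nat.card (π ⁻¹' {π b}) ≤ 1 := by nlinarith
  exact congrArg Subtype.val
    ((Finite.card_le_one_iff_subsingleton.mp this).elim (⟨b', hb'⟩ : π ⁻¹' {π b}) ⟨b, rfl⟩)

end IsTwoByBlockTransitive_s13

end Fibres

theorem eq_of_swap_mem {X Ω : Type*} [DecidableEq X] {G : Subgroup (Perm X)}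
    (hswap : ∀ x y : X, swap x y ∈ G) [MulAction G Ω] {π : Ω → X}
    (h : IsTwoByBlockTransitive_s13 G π) {a b b' : Ω} (hab : π a ≠ π b) (hb' : π b' = π b) :
    b' = b := by
  let c : G := ⟨swap (π a) (π b), hswap _ _⟩
  have hca : π (c • a) = π b := by rw [h.map_smul]; exact swap_apply_left _ _
  have hc : ∀ g ∈ fixingSubgroup G ({π a, π (c • a)} : Set X), Commute g c := fun g hg => by
    have hfix := (mem_fixingSubgroup_iff G).mp hg
    rw [hca] at hfix
    exact Subtype.ext (commute_swap (hfix _ (.inl rfl)) (hfix _ (.inr rfl)))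
  have hfibre {w : Ω} (hw : π w = π b) : w = c • a :=
    h.eq_smul_of_commute (hca ▸ hab) hc (hw.trans hca.symm)
  exact (hfibre hb').trans (hfibre rfl).symm

namespace alternatingGroup

variable {α : Type*} [Fintype α] [DecidableEq α]

theorem fixingSubgroup_le_range_ofSubtype (s : Finset α) :
    fixingSubgroup (alternatingGroup α) (s : Set α) ≤ (ofSubtype sᶜ).range := by
  intro g hg
  rw [mem_range_ofSubtype_iff]
  intro v hv
  rw [Finset.mem_compl]
  exact fun hvs => mem_support.mp hv ((mem_fixingSubgroup_iff _).mp hg v hvs)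

theorem card_fixingSubgroup_le (s : Finset α) :
    Nat.card (fixingSubgroup (alternatingGroup α) (s : Set α)) ≤
      Nat.card (alternatingGroup ↥(sᶜ)) :=
  (Subgroup.card_le_of_le (fixingSubgroup_le_range_ofSubtype s)).trans
    (Nat.card_congr (MonoidHom.ofInjective ofSubtype_injective).toEquiv.symm).le

theorem card_le_three (hα : Nat.card α ≤ 3) : Nat.card (alternatingGroup α) ≤ 3 := by
  rcases subsingleton_or_nontrivial α with hα' | hα'
  · exact (Finite.card_le_one_iff_subsingleton.mpr inferInstance).trans (by norm_num)
  · rw [nat_card_alternatingGroup]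
    exact Nat.div_le_of_le_mul (Nat.factorial_le hα)

variable {Ω : Type*} [MulAction (alternatingGroup α) Ω] {π : Ω → α}

theorem eq_of_card_le_five (h : IsTwoByBlockTransitive_s13 (alternatingGroup α) π)
    (hα : Nat.card α ≤ 5) {a b b' : Ω} (hab : π a ≠ π b) (hb' : π b' = π b) : b' = b := by
  refine h.eq_of_card_fixingSubgroup_lt_four hab hb' ?_
  have hcompl : Nat.card ↥(({π a, π b} : Finset α)ᶜ) ≤ 3 := by
    rw [Nat.card_eq_fintype_card, Fintype.card_coe, Finset.card_compl, Finset.card_pair hab,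
      ← Nat.card_eq_fintype_card]
    omega
  have hfix := card_fixingSubgroup_le ({π a, π b} : Finset α)
  rw [Finset.coe_pair] at hfix
  exact hfix.trans_lt ((card_le_three hcompl).trans_lt (by norm_num))

theorem nonempty_fibre_embedding (h : IsTwoByBlockTransitive_s13 (alternatingGroup α) π)
    (hα : 3 ≤ Nat.card α) {a b : Ω} (hab : π a ≠ π b) :
    Nonempty (π ⁻¹' {π b} ↪ ↥({π a, π b} : Set α)ᶜ) := by
  obtain ⟨z, -, hz⟩ := Finset.exists_mem_notMem_of_card_lt_card
    (s := {π a, π b}) (t := Finset.univ) (by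
      rw [Finset.card_univ, ← Nat.card_eq_fintype_card, Finset.card_pair hab]; omega)
  rw [Finset.mem_insert, Finset.mem_singleton, not_or] at hz
  let c : alternatingGroup α := ⟨swap (π a) z * swap (π a) (π b),
    (isThreeCycle_swap_mul_swap_same (Ne.symm hz.1) hab hz.2).mem_alternatingGroup⟩
  have hca : π (c • a) = π b := by
    rw [h.map_smul]
    change swap (π a) z (swap (π a) (π b) (π a)) = π b
    rw [swap_apply_left, swap_apply_of_ne_of_ne (Ne.symm hab) (Ne.symm hz.2)]
  have hc : ∀ g ∈ fixingSubgroup _ ({π a, π (c • a), z} : Set α), Commute g c := fun g hg => by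
    have hfix := (mem_fixingSubgroup_iff _).mp hg
    rw [hca] at hfix
    exact Subtype.ext ((commute_swap (hfix _ (.inl rfl)) (hfix _ (.inr (.inr rfl)))).mul_right
      (commute_swap (hfix _ (.inl rfl)) (hfix _ (.inr (.inl rfl)))))
  rw [← hca]
  refine h.nonempty_fibre_embedding (hca ▸ hab) ?_ hc
  rw [hca]
  rintro (hza | hzb)
  · exact hz.1 hza
  · exact hz.2 hzb

theorem eq_of_six_le_card (h : IsTwoByBlockTransitive_s13 (alternatingGroup α) π)
    (hα : 6 ≤ Nat.card α) {a b b' : Ω} (hab : π a ≠ π b) (hb' : π b' = π b) : b' = b := by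
  obtain ⟨e⟩ := nonempty_fibre_embedding h (by omega) hab
  have : Finite (π ⁻¹' {π b}) := .of_injective e e.injective
  have hfibre : Nat.card (π ⁻¹' {π b}) ≤ Nat.card α - 2 := by
    refine (Nat.card_le_card_of_injective e e.injective).trans_eq ?_
    rw [Nat.card_coe_set_eq, Set.ncard_compl, Set.ncard_pair hab]
  set s : Finset α := {π b}ᶜ
  have hs : Nat.card s = Nat.card α - 1 := by
    rw [Nat.card_eq_fintype_card, Fintype.card_coe, Finset.card_compl, Finset.card_singleton,
      Nat.card_eq_fintype_card]
  have : Nontrivial s := Finite.one_lt_card_iff_nontrivial.mp (by omega)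
  have : IsSimpleGroup (alternatingGroup s) := isSimpleGroup (by omega)
  let φ : alternatingGroup s →* stabilizer (alternatingGroup α) (π b) :=
    (ofSubtype s).codRestrict _ fun k => ofSubtype_apply_of_not_mem _ (by simp [s])
  have hcard : (Nat.card (π ⁻¹' {π b})).factorial < Nat.card (alternatingGroup s) := by
    rw [nat_card_alternatingGroup, hs, show Nat.card α - 1 = Nat.card α - 2 + 1 by omega,
      Nat.factorial_succ]
    have hpos := Nat.factorial_pos (Nat.card α - 2)
    calc (Nat.card (π ⁻¹' {π b})).factorial ≤ (Nat.card α - 2).factorial :=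
          Nat.factorial_le hfibre
      _ < (Nat.card α - 2 + 1) * (Nat.card α - 2).factorial / 2 :=
          (Nat.le_div_iff_mul_le two_pos).mpr (by
            nlinarith [Nat.mul_le_mul_right (Nat.card α - 2).factorial
              (show 4 ≤ Nat.card α - 2 by omega)])
  obtain ⟨g, hg, -, hgb⟩ := h.exists_mem_fixingSubgroup hab rfl hb'
  obtain ⟨k, rfl⟩ : g ∈ (ofSubtype s).range := by
    refine fixingSubgroup_le_range_ofSubtype {π b} ?_
    rw [Finset.coe_singleton]
    exact fixingSubgroup_antitone _ _ (by simp) hg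
  rw [← hgb]
  exact smul_eq_self_of_factorial_card_fibre_lt h.map_smul φ hcard k rfl

end alternatingGroup

/-- Corollary 3.5: the natural actions of the finite symmetric and alternating
groups do not extend properly to 2-by-block-transitive actions: if the blocks
are the fibres of a `G`-equivariant surjection `π : Ω → X` (the natural
`d`-point action on blocks) and `G` is transitive on pairs of points in
distinct blocks, then the blocks are singletons. -/
theorem stmt_13 {X Ω : Type*} [Fintype X] [DecidableEq X] [Nontrivial X]
    (G : Subgroup (Equiv.Perm X)) (hG : G = ⊤ ∨ G = alternatingGroup X)
    [MulAction ↥G Ω] (π : Ω → X) (hπ : Function.Surjective π)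
    (hequivariant : ∀ (g : ↥G) (ωp : Ω), π (g • ωp) = (g : Equiv.Perm X) (π ωp))
    (h2bt : ∀ a b c d : Ω, π a ≠ π b → π c ≠ π d →
      ∃ g : ↥G, g • a = c ∧ g • b = d) :
    Function.Injective π := by
  have h : IsTwoByBlockTransitive_s13 G π := ⟨hequivariant, h2bt⟩
  refine hπ.injective_of_forall_eq fun a b b' hab hb' => ?_
  rcases hG with rfl | rfl
  · exact eq_of_swap_mem (fun _ _ => Subgroup.mem_top _) h hab hb'
  · rcases le_or_gt (Nat.card X) 5 with hX | hX
    · exact alternatingGroup.eq_of_card_le_five h hX hab hb'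
    · exact alternatingGroup.eq_of_six_le_card h hX hab hb'
end

section
/- Let G = Sp_{2m}(2) (m ≥ 3) in either of its two standard 2-transitive actions on Ω±. Then for any two distinct points ω, ω', the setwise stabilizer of the unordered pair splits as a direct product G({ω,ω'}) = G(ω,ω') × ⟨s⟩, where s is an involution in G swapping ω and ω' and centralizing G(ω,ω'). -/
/-!
Both points polarize to `φ`, so `θ' = θ + φ(c, ·)` for some `c`, and the transvection
`t_c : u ↦ u + φ(c, u) c` then satisfies `θ ∘ t_c = θ'` as soon as `θ(c) = 0`. That `θ(c) = 0`
is where "same orbit" enters: the Gauss sum `S(θ) = ∑ᵤ (-1)^θ(u)` is an orbit invariant with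
`S(θ)² = |V|`, while `S(θ') = (-1)^θ(c) S(θ)`. An isometry fixing `θ` and `θ'` fixes the
functional `θ' - θ = φ(c, ·)`, hence fixes `c` by nondegeneracy and commutes with `t_c`; an
isometry swapping `θ` and `θ'` is `t_c` followed by one fixing both.
-/

open LinearMap (BilinForm)

theorem LinearEquiv.ofInvolutive_symm_apply {R M : Type*} [Semiring R] [AddCommMonoid M]
    [Module R M] (f : M →ₗ[R] M) (hf : Function.Involutive f) (x : M) :
    (LinearEquiv.ofInvolutive f hf).symm x = f x := by
  rw [LinearEquiv.symm_apply_eq, LinearEquiv.coe_ofInvolutive, hf]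

namespace SymplecticF2

variable {V : Type*} [AddCommGroup V] [Module (ZMod 2) V]
  {φ : BilinForm (ZMod 2) V} {θ θ' : V → ZMod 2}

def signChar : AddChar (ZMod 2) ℤ := AddChar.zmodChar 2 (by norm_num : (-1 : ℤ) ^ 2 = 1)

lemma signChar_eq_one_iff {a : ZMod 2} : signChar a = 1 ↔ a = 0 := by
  revert a; decide

def HasPolar (θ : V → ZMod 2) (φ : BilinForm (ZMod 2) V) : Prop :=
  ∀ u v, φ u v = QuadraticMap.polar θ u v

namespace HasPolar

lemma map_add (hθ : HasPolar θ φ) (u v : V) : θ (u + v) = θ u + θ v + φ u v := by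
  rw [hθ]; exact QuadraticMap.map_add θ u v

lemma map_zero (hθ : HasPolar θ φ) : θ 0 = 0 := by
  simpa using hθ.map_add 0 0

lemma map_smul (hθ : HasPolar θ φ) (a : ZMod 2) (u : V) : θ (a • u) = a * θ u := by
  obtain rfl | rfl : a = 0 ∨ a = 1 := by revert a; decide
  · simp [hθ.map_zero]
  · simp

lemma exists_eq_add_apply [FiniteDimensional (ZMod 2) V] (hθ : HasPolar θ φ)
    (hθ' : HasPolar θ' φ) (hφ : φ.Nondegenerate) : ∃ c, ∀ u, θ' u = θ u + φ c u := by
  let δ : V →+ ZMod 2 := AddMonoidHom.mk' (θ' - θ) fun u v => by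
    simp only [Pi.sub_apply, hθ.map_add, hθ'.map_add]; ring
  refine ⟨(φ.toDual hφ).symm (δ.toZModLinearMap 2), fun u => ?_⟩
  rw [BilinForm.apply_toDual_symm_apply]
  simp [δ]

end HasPolar

section GaussSum

variable [Fintype V]

def gaussSum (θ : V → ZMod 2) : ℤ := ∑ u, signChar (θ u)

lemma sum_signChar_apply_eq_zero (hφ : φ.SeparatingRight) {w : V} (hw : w ≠ 0) :
    ∑ u, signChar (φ u w) = 0 := by
  refine AddChar.sum_eq_zero_of_ne_one
    (ψ := signChar.compAddMonoidHom (φ.flip w).toAddMonoidHom) ?_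
  obtain ⟨u, hu⟩ : ∃ u, φ u w ≠ 0 := by
    by_contra! h
    exact hw (hφ w h)
  exact AddChar.ne_one_iff.2 ⟨u, by simpa [signChar_eq_one_iff] using hu⟩

lemma HasPolar.gaussSum_mul_self (hθ : HasPolar θ φ) (hφ : φ.SeparatingRight) :
    gaussSum θ * gaussSum θ = Fintype.card V := by
  calc gaussSum θ * gaussSum θ = ∑ u, ∑ w, signChar (θ u) * signChar (θ (u + w)) := by
        rw [gaussSum, Finset.sum_mul_sum]
        exact Finset.sum_congr rfl fun u _ =>
          (Fintype.sum_equiv (Equiv.addLeft u) _ _ fun w => rfl).symm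
    _ = ∑ u, ∑ w, signChar (θ w) * signChar (φ u w) := by
        refine Finset.sum_congr rfl fun u _ => Finset.sum_congr rfl fun w _ => ?_
        rw [← AddChar.map_add_eq_mul, ← AddChar.map_add_eq_mul, hθ.map_add,
          add_assoc (θ u), CharTwo.add_cancel_left]
    _ = ∑ w, signChar (θ w) * ∑ u, signChar (φ u w) := by
        rw [Finset.sum_comm]
        simp only [Finset.mul_sum]
    _ = Fintype.card V := by
        rw [Finset.sum_eq_single 0
          (fun w _ hw => by rw [sum_signChar_apply_eq_zero hφ hw, mul_zero])
          (fun h => absurd (Finset.mem_univ 0) h)]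
        simp [hθ.map_zero]

lemma HasPolar.gaussSum_add_apply (hθ : HasPolar θ φ) {c : V} (hc : ∀ u, θ' u = θ u + φ c u) :
    gaussSum θ' = signChar (θ c) * gaussSum θ := by
  have hshift : ∀ u, θ' u = θ c + θ (c + u) := fun u => by
    rw [hc, hθ.map_add, add_assoc, CharTwo.add_cancel_left]
  rw [gaussSum, gaussSum, Finset.mul_sum]
  simp only [hshift, AddChar.map_add_eq_mul]
  exact Fintype.sum_equiv (Equiv.addLeft c) _ _ fun u => rfl

lemma HasPolar.gaussSum_ne_zero (hθ : HasPolar θ φ) (hφ : φ.SeparatingRight) :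
    gaussSum θ ≠ 0 := by
  intro h
  have hcard := hθ.gaussSum_mul_self hφ
  rw [h, mul_zero] at hcard
  exact Fintype.card_ne_zero (by exact_mod_cast hcard.symm)

lemma HasPolar.apply_eq_zero_of_gaussSum_eq (hθ : HasPolar θ φ) (hφ : φ.SeparatingRight)
    {c : V} (hc : ∀ u, θ' u = θ u + φ c u) (hS : gaussSum θ' = gaussSum θ) : θ c = 0 := by
  rw [hθ.gaussSum_add_apply hc] at hS
  exact signChar_eq_one_iff.1 <|
    mul_right_cancel₀ (hθ.gaussSum_ne_zero hφ) (hS.trans (one_mul _).symm)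

end GaussSum

section Transvection

def transvection (φ : BilinForm (ZMod 2) V) (c : V) : V →ₗ[ZMod 2] V :=
  LinearMap.id + (φ c).smulRight c

lemma transvection_apply (c u : V) : transvection φ c u = u + φ c u • c := rfl

lemma transvection_involutive {c : V} (hc : φ c c = 0) :
    Function.Involutive (transvection φ c) := by
  intro u
  simp only [transvection_apply, map_add, map_smul, hc, add_zero, add_assoc,
    ← add_smul, CharTwo.add_self_eq_zero, zero_smul]

lemma transvection_isometry (hφ : LinearMap.IsAlt φ) (c u v : V) :
    φ (transvection φ c u) (transvection φ c v) = φ u v := by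
  simp only [transvection_apply, map_add, map_smul, LinearMap.add_apply, LinearMap.smul_apply,
    hφ.self_eq_zero, ← hφ.neg c u, smul_eq_mul]
  ring

lemma transvection_comm_of_isometry {g : V →ₗ[ZMod 2] V} (hg : ∀ u v, φ (g u) (g v) = φ u v)
    {c : V} (hgc : g c = c) (u : V) : g (transvection φ c u) = transvection φ c (g u) := by
  rw [transvection_apply, transvection_apply, map_add, map_smul, hgc, ← hg c u, hgc]

lemma eq_of_isometry_of_apply_symm {g : V ≃ₗ[ZMod 2] V} (hφ : φ.SeparatingLeft)
    (hg : ∀ u v, φ (g u) (g v) = φ u v) {c : V} (h : ∀ u, φ c (g.symm u) = φ c u) : g c = c := by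
  rw [← sub_eq_zero]
  refine hφ _ fun v => ?_
  rw [map_sub, LinearMap.sub_apply, sub_eq_zero]
  calc φ (g c) v = φ (g c) (g (g.symm v)) := by rw [g.apply_symm_apply]
    _ = φ c v := (hg _ _).trans (h v)

lemma HasPolar.apply_transvection (hθ : HasPolar θ φ) (hφ : LinearMap.IsAlt φ) {c : V}
    (hc : ∀ u, θ' u = θ u + φ c u) (hθc : θ c = 0) (u : V) : θ (transvection φ c u) = θ' u := by
  rw [hc, transvection_apply, hθ.map_add, hθ.map_smul, hθc, mul_zero, add_zero, _root_.map_smul,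
    smul_eq_mul, ← hφ.neg c u, ZMod.neg_eq_self_mod_two, ← sq, ZMod.pow_card]

lemma transvection_comm_of_stabilizes (hφ : φ.SeparatingLeft) {c : V}
    (hc : ∀ u, θ' u = θ u + φ c u) {g : V ≃ₗ[ZMod 2] V}
    (hg : ∀ u v, φ (g u) (g v) = φ u v) (hgθ : ∀ u, θ (g.symm u) = θ u)
    (hgθ' : ∀ u, θ' (g.symm u) = θ' u) (u : V) :
    g (transvection φ c u) = transvection φ c (g u) := by
  refine transvection_comm_of_isometry (g := g.toLinearMap) hg
    (eq_of_isometry_of_apply_symm hφ hg fun v => ?_) u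
  have h := hgθ' v
  rw [hc, hc, hgθ] at h
  exact add_left_cancel h

end Transvection

end SymplecticF2

open SymplecticF2

theorem stmt_16_general {V : Type*} [AddCommGroup V] [Module (ZMod 2) V]
    [FiniteDimensional (ZMod 2) V]
    (φ : V →ₗ[ZMod 2] V →ₗ[ZMod 2] ZMod 2)
    (halt : ∀ u : V, φ u u = 0)
    (hnd : ∀ u : V, (∀ v : V, φ u v = 0) → u = 0)
    (θ θ' : V → ZMod 2)
    (hθ : ∀ u v : V, φ u v = θ (u + v) - θ u - θ v)
    (hθ' : ∀ u v : V, φ u v = θ' (u + v) - θ' u - θ' v)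
    (horbit : ∃ g : V ≃ₗ[ZMod 2] V, (∀ u v : V, φ (g u) (g v) = φ u v) ∧
      ∀ u : V, θ' u = θ (g.symm u)) :
    ∃ s : V ≃ₗ[ZMod 2] V, (∀ u v : V, φ (s u) (s v) = φ u v) ∧
      (∀ u : V, s (s u) = u) ∧
      (∀ u : V, θ (s.symm u) = θ' u) ∧ (∀ u : V, θ' (s.symm u) = θ u) ∧
      (∀ g : V ≃ₗ[ZMod 2] V, (∀ u v : V, φ (g u) (g v) = φ u v) →
        ((∀ u : V, θ (g.symm u) = θ u) ∧ (∀ u : V, θ' (g.symm u) = θ' u)) →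
        ∀ u : V, g (s u) = s (g u)) ∧
      (∀ g : V ≃ₗ[ZMod 2] V, (∀ u v : V, φ (g u) (g v) = φ u v) →
        (((∀ u : V, θ (g.symm u) = θ u) ∧ (∀ u : V, θ' (g.symm u) = θ' u)) ∨
         ((∀ u : V, θ (g.symm u) = θ' u) ∧ (∀ u : V, θ' (g.symm u) = θ u))) →
        ((∀ u : V, θ (g.symm u) = θ u) ∧ (∀ u : V, θ' (g.symm u) = θ' u)) ∨
        ∃ h : V ≃ₗ[ZMod 2] V, (∀ u v : V, φ (h u) (h v) = φ u v) ∧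
          (∀ u : V, θ (h.symm u) = θ u) ∧ (∀ u : V, θ' (h.symm u) = θ' u) ∧
          ∀ u : V, g u = h (s u)) := by
  have : Finite V := Module.finite_of_finite (ZMod 2)
  have : Fintype V := Fintype.ofFinite V
  have hφ : φ.Nondegenerate :=
    (LinearMap.IsAlt.isRefl halt).nondegenerate_iff_separatingLeft.2 hnd
  obtain ⟨c, hc⟩ := HasPolar.exists_eq_add_apply hθ hθ' hφ
  have hθc : θ c = 0 := by
    obtain ⟨g₀, -, hg₀⟩ := horbit
    refine HasPolar.apply_eq_zero_of_gaussSum_eq hθ hφ.2 hc ?_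
    simp only [SymplecticF2.gaussSum, hg₀]
    exact g₀.symm.toEquiv.sum_comp (signChar ∘ θ)
  let s := LinearEquiv.ofInvolutive _ (transvection_involutive (φ := φ) (halt c))
  have hs_symm (u : V) : s.symm u = s u := LinearEquiv.ofInvolutive_symm_apply _ _ u
  have hs_invol (u : V) : s (s u) = u := transvection_involutive (halt c) u
  have hθs (u : V) : θ (s u) = θ' u := HasPolar.apply_transvection hθ halt hc hθc u
  have hθ's (u : V) : θ' (s u) = θ u := by rw [← hθs, hs_invol]
  refine ⟨s, transvection_isometry halt c, hs_invol, fun u => by rw [hs_symm, hθs],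
    fun u => by rw [hs_symm, hθ's], fun g hg ⟨hgθ, hgθ'⟩ =>
    transvection_comm_of_stabilizes hnd hc hg hgθ hgθ', fun g hg hgθ => ?_⟩
  refine hgθ.imp_right fun ⟨hgθ, hgθ'⟩ =>
    ⟨s.trans g, fun u v => ?_, fun u => ?_, fun u => ?_, fun u => ?_⟩
  · exact (hg _ _).trans (transvection_isometry halt c u v)
  · rw [LinearEquiv.symm_trans_apply, hs_symm, hθs, hgθ']
  · rw [LinearEquiv.symm_trans_apply, hs_symm, hθ's, hgθ]
  · rw [LinearEquiv.trans_apply, hs_invol]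

/-- Lemma 3.6: for `G = Sp_{2m}(2)` with `m ≥ 3` in either of its two standard
2-transitive actions (on quadratic forms `θ` polarizing the symplectic form
`φ`, with `g • θ = θ ∘ g⁻¹`), the setwise stabilizer of an unordered pair of
distinct points `{θ, θ'}` in the same orbit splits as the direct product of the
pointwise stabilizer with `⟨s⟩` for an involution `s` swapping `θ` and `θ'`
and centralizing the pointwise stabilizer. -/
theorem stmt_16 {V : Type*} [AddCommGroup V] [Module (ZMod 2) V]
    [FiniteDimensional (ZMod 2) V]
    (m : ℕ) (hm : 3 ≤ m) (hdim : Module.finrank (ZMod 2) V = 2 * m)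
    (φ : V →ₗ[ZMod 2] V →ₗ[ZMod 2] ZMod 2)
    (halt : ∀ u : V, φ u u = 0)
    (hnd : ∀ u : V, (∀ v : V, φ u v = 0) → u = 0)
    (θ θ' : V → ZMod 2)
    (hθ : ∀ u v : V, φ u v = θ (u + v) - θ u - θ v)
    (hθ' : ∀ u v : V, φ u v = θ' (u + v) - θ' u - θ' v)
    (hne : θ ≠ θ')
    (horbit : ∃ g : V ≃ₗ[ZMod 2] V, (∀ u v : V, φ (g u) (g v) = φ u v) ∧
      ∀ u : V, θ' u = θ (g.symm u)) :
    ∃ s : V ≃ₗ[ZMod 2] V, (∀ u v : V, φ (s u) (s v) = φ u v) ∧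
      (∀ u : V, s (s u) = u) ∧
      (∀ u : V, θ (s.symm u) = θ' u) ∧ (∀ u : V, θ' (s.symm u) = θ u) ∧
      (∀ g : V ≃ₗ[ZMod 2] V, (∀ u v : V, φ (g u) (g v) = φ u v) →
        ((∀ u : V, θ (g.symm u) = θ u) ∧ (∀ u : V, θ' (g.symm u) = θ' u)) →
        ∀ u : V, g (s u) = s (g u)) ∧
      (∀ g : V ≃ₗ[ZMod 2] V, (∀ u v : V, φ (g u) (g v) = φ u v) →
        (((∀ u : V, θ (g.symm u) = θ u) ∧ (∀ u : V, θ' (g.symm u) = θ' u)) ∨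
         ((∀ u : V, θ (g.symm u) = θ' u) ∧ (∀ u : V, θ' (g.symm u) = θ u))) →
        ((∀ u : V, θ (g.symm u) = θ u) ∧ (∀ u : V, θ' (g.symm u) = θ' u)) ∨
        ∃ h : V ≃ₗ[ZMod 2] V, (∀ u v : V, φ (h u) (h v) = φ u v) ∧
          (∀ u : V, θ (h.symm u) = θ u) ∧ (∀ u : V, θ' (h.symm u) = θ' u) ∧
          ∀ u : V, g u = h (s u)) :=
  stmt_16_general φ halt hnd θ θ' hθ hθ' horbit
end
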